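/- arXiv:2603.04649 — 6 statements merged into one kernel-verified Lean document; each statement's English description precedes it below -/
import Mathlib

section
/- For a ≥ 0, b ∈ (-π, π) with (a,b) ≠ (0,0), the series ∑_{k ∈ ℤ} 2a/(a² + (b - kπ)²) converges and equals 2 sinh(2a)/(cosh(2a) - cos(2b)). -/
/-!
Write `w = b + a i`. Since `Im (1 / (w - kπ)) = -a / (a² + (b - kπ)²)`, the series is `-2 Im` of the
Mittag-Leffler expansion `cot w = 1 / w + ∑_{n ≥ 1} (1 / (w - nπ) + 1 / (w + nπ))`, and
`Im (cot (b + a i)) = -sinh (2a) / (cosh (2a) - cos (2b))`. The expansion only converges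
symmetrically, but for `a > 0` the terms are nonnegative, so it converges unconditionally over `ℤ`.
-/

open Real

theorem hasSum_int_of_nonneg_of_hasSum_add_neg {f : ℤ → ℝ} {s : ℝ} (hf : 0 ≤ f)
    (h : HasSum (fun n : ℕ => f (n + 1) + f (-(n + 1))) s) : HasSum f (f 0 + s) := by
  have hpos : Summable fun n : ℕ => f (n + 1) :=
    h.summable.of_nonneg_of_le (fun _ => hf _) fun _ => le_add_of_nonneg_right (hf _)
  have hneg : Summable fun n : ℕ => f (-(n + 1)) :=
    h.summable.of_nonneg_of_le (fun _ => hf _) fun _ => le_add_of_nonneg_left (hf _)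
  rw [← (hpos.hasSum.add hneg.hasSum).unique h, add_left_comm, ← add_assoc]
  exact hpos.hasSum.of_add_one_of_neg_add_one hneg.hasSum

namespace Complex

theorem hasSum_cot_sub_inv {w : ℂ} (hw : ∀ n : ℤ, w ≠ n * π) :
    HasSum (fun n : ℕ => 1 / (w - (n + 1) * π) + 1 / (w + (n + 1) * π)) (cot w - 1 / w) := by
  have hπ : (π : ℂ) ≠ 0 := ofReal_ne_zero.mpr pi_ne_zero
  have hx : w / π ∈ integerComplement := by
    rintro ⟨n, hn⟩
    exact hw n (by rw [hn, div_mul_cancel₀ _ hπ])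
  have h := (summable_cotTerm hx).hasSum.mul_left (π : ℂ)⁻¹
  rw [← cot_series_rep' hx, mul_div_cancel₀ _ hπ] at h
  have hterm : ∀ n : ℕ, 1 / (w - (n + 1) * π) + 1 / (w + (n + 1) * π) =
      (π : ℂ)⁻¹ * cotTerm (w / π) n := by
    intro n
    simp only [cotTerm]
    field_simp
  rw [funext hterm, show cot w - 1 / w = (π : ℂ)⁻¹ * (π * cot w - 1 / (w / π)) by field_simp]
  exact h

theorem cot_im (z : ℂ) :
    (cot z).im = -Real.sinh (2 * z.im) / (Real.cosh (2 * z.im) - Real.cos (2 * z.re)) := by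
  obtain ⟨x, y, rfl⟩ : ∃ x y : ℝ, z = x + y * I := ⟨z.re, z.im, (re_add_im z).symm⟩
  rw [cot_eq_cos_div_sin, div_im, sin_add_mul_I, cos_add_mul_I]
  simp only [← ofReal_sin, ← ofReal_cos, ← ofReal_sinh, ← ofReal_cosh, normSq_apply, add_re,
    add_im, sub_re, sub_im, mul_re, mul_im, ofReal_re, ofReal_im, I_re, I_im, mul_zero, zero_mul,
    mul_one, sub_zero, zero_add, add_zero, zero_sub]
  have hnum : -(Real.sin x * Real.sinh y) * (Real.sin x * Real.cosh y) -
      Real.cos x * Real.cosh y * (Real.cos x * Real.sinh y) = -Real.sinh (2 * y) / 2 := by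
    rw [Real.sinh_two_mul]
    linear_combination (-(Real.sinh y * Real.cosh y)) * Real.sin_sq_add_cos_sq x
  have hden : Real.sin x * Real.cosh y * (Real.sin x * Real.cosh y) +
      Real.cos x * Real.sinh y * (Real.cos x * Real.sinh y) =
      (Real.cosh (2 * y) - Real.cos (2 * x)) / 2 := by
    rw [Real.cosh_two_mul, Real.cos_two_mul]
    linear_combination (Real.sinh y ^ 2 + 1) * Real.sin_sq_add_cos_sq x +
      (Real.sin x ^ 2 - 1 / 2) * Real.cosh_sq y
  rw [← sub_div, hnum, hden, div_div_div_cancel_right₀ two_ne_zero]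

theorem hasSum_im_div_normSq_sub_mul_pi {w : ℂ} (hw : 0 < w.im) :
    HasSum (fun k : ℤ => w.im / normSq (w - k * π)) (-(cot w).im) := by
  have hw_ne : ∀ n : ℤ, w ≠ n * π := fun n h => by
    simpa [h] using hw.ne'
  have hterm : ∀ k : ℤ, w.im / normSq (w - k * π) = -(1 / (w - k * π)).im := fun k => by
    simp [inv_im, neg_div]
  have hf : 0 ≤ fun k : ℤ => w.im / normSq (w - k * π) := fun k =>
    div_nonneg hw.le (normSq_nonneg _)
  have hsum := hasSum_int_of_nonneg_of_hasSum_add_neg hf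
    ((hasSum_im (hasSum_cot_sub_inv hw_ne)).neg.congr_fun fun n => ?_)
  · convert hsum using 1
    rw [hterm 0]
    simp only [Int.cast_zero, zero_mul, sub_zero, sub_im]
    ring
  · rw [hterm, hterm, ← neg_add, ← add_im, Int.cast_neg]
    push_cast
    rw [neg_mul, sub_neg_eq_add]

end Complex

theorem stmt_1_general (a b : ℝ) (ha : 0 ≤ a) :
    HasSum (fun k : ℤ => 2 * a / (a ^ 2 + (b - k * π) ^ 2))
      (2 * Real.sinh (2 * a) / (Real.cosh (2 * a) - Real.cos (2 * b))) := by
  rcases ha.eq_or_lt with rfl | ha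
  · simp
  have h := (Complex.hasSum_im_div_normSq_sub_mul_pi (w := ⟨b, a⟩) ha).mul_left 2
  rw [Complex.cot_im, neg_div, neg_neg, ← mul_div_assoc] at h
  refine h.congr_fun fun k => ?_
  simp only [Complex.normSq_apply, Complex.sub_re, Complex.mul_re, Complex.intCast_re,
    Complex.ofReal_re, Complex.intCast_im, Complex.ofReal_im, mul_zero, sub_zero, Complex.sub_im,
    Complex.mul_im, zero_mul, add_zero]
  ring

/-- For `a ≥ 0`, `b ∈ (-π, π)`, `(a,b) ≠ (0,0)`:
`∑_{k ∈ ℤ} 2a/(a² + (b - kπ)²) = 2 sinh(2a)/(cosh(2a) - cos(2b))`. -/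
theorem stmt_1 (a b : ℝ) (ha : 0 ≤ a) (hb : b ∈ Set.Ioo (-π) π) (hab : ¬(a = 0 ∧ b = 0)) :
    HasSum (fun k : ℤ => 2 * a / (a ^ 2 + (b - k * π) ^ 2))
      (2 * Real.sinh (2 * a) / (Real.cosh (2 * a) - Real.cos (2 * b))) :=
  stmt_1_general a b ha
end

section
/- Fix t > 0, q > 1, and define f(a) = ∑_{j ∈ ℤ} (a + (2tj)²)^{-q/2} for a > 0 (the series converges since q > 1). Then f is strictly completely monotone: for every integer k ≥ 0 and every a > 0, (-1)^k f^{(k)}(a) > 0. -/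
open Real

lemma summable_aux (t : ℝ) (ht : 0 < t) (r : ℝ) (hr : r < -(1/2)) (b : ℝ) (hb : 0 < b) :
    Summable (fun j : ℤ => (b + (2 * t * j) ^ 2) ^ r) := by
  have h1 : Summable (fun j : ℤ => |(j:ℝ)| ^ (2*r)) := by
    have := Real.summable_abs_int_rpow (b := -(2*r)) (by linarith)
    simpa using this
  apply Summable.of_norm_bounded_eventually (g := fun j : ℤ => ((2*t)^2)^r * |(j:ℝ)| ^ (2*r))
    (h1.mul_left _)
  have hfin : ({0} : Set ℤ).Finite := Set.finite_singleton 0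
  filter_upwards [hfin.compl_mem_cofinite] with j hj
  have hj0 : j ≠ 0 := by simpa using hj
  have hjpos : (0:ℝ) < |(j:ℝ)| := abs_pos.mpr (by exact_mod_cast hj0)
  have hc : (0:ℝ) < (2 * t * j) ^ 2 := by positivity
  have hbase : (0:ℝ) < b + (2 * t * j) ^ 2 := by linarith
  rw [Real.norm_eq_abs, abs_of_nonneg (Real.rpow_nonneg hbase.le r)]
  have h2 : (b + (2 * t * j) ^ 2) ^ r ≤ ((2 * t * j) ^ 2) ^ r :=
    Real.rpow_le_rpow_of_nonpos hc (by linarith) (by linarith)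
  refine h2.trans_eq ?_
  have : (2 * t * (j:ℝ)) ^ 2 = (2*t)^2 * |(j:ℝ)|^2 := by
    rw [sq_abs]; ring
  rw [this, Real.mul_rpow (by positivity) (by positivity)]
  congr 1
  rw [show (2:ℝ)*r = (2:ℕ) * r by norm_num, Real.rpow_natCast_mul (abs_nonneg _)]

set_option maxHeartbeats 1000000 in
lemma hasDeriv_aux (t : ℝ) (ht : 0 < t) (q : ℝ) (hq : 1 < q) (r : ℝ) (hr : r < -(1/2))
    (a : ℝ) (ha : 0 < a) :
    HasDerivAt (fun x : ℝ => ∑' j : ℤ, (x + (2 * t * j) ^ 2) ^ r)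
      (∑' j : ℤ, r * (a + (2 * t * j) ^ 2) ^ (r - 1)) a := by
  have hsum : Summable (fun j : ℤ => |r| * (a/2 + (2 * t * j) ^ 2) ^ (r-1)) :=
    (summable_aux t ht (r-1) (by linarith) (a/2) (by linarith)).mul_left _
  refine hasDerivAt_tsum_of_isPreconnected (g := fun (j : ℤ) (x : ℝ) => (x + (2 * t * j) ^ 2) ^ r)
    (g' := fun (j : ℤ) (x : ℝ) => r * (x + (2 * t * j) ^ 2) ^ (r - 1)) hsum (isOpen_Ioi (a := a/2))
    (isPreconnected_Ioi) (fun j x hx => ?_) (fun j x hx => ?_) (show a ∈ Set.Ioi (a/2) by simp [Set.mem_Ioi]; linarith)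
    (summable_aux t ht r hr a ha) (show a ∈ Set.Ioi (a/2) by simp [Set.mem_Ioi]; linarith)
  · have hx' : (0:ℝ) < x + (2 * t * j) ^ 2 := by
      have := sq_nonneg (2 * t * (j:ℝ)); have : (a:ℝ)/2 < x := hx; nlinarith [sq_nonneg (2 * t * (j:ℝ))]
    have h := ((hasDerivAt_id x).add_const ((2 * t * (j:ℝ)) ^ 2)).rpow_const
      (p := r) (Or.inl hx'.ne')
    simpa using h
  · have hx' : (a:ℝ)/2 < x := hx
    have hc : (0:ℝ) ≤ (2 * t * (j:ℝ)) ^ 2 := sq_nonneg _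
    have hb2 : (0:ℝ) < a/2 + (2 * t * j) ^ 2 := by linarith
    rw [Real.norm_eq_abs, abs_mul, abs_of_nonneg (Real.rpow_nonneg (by linarith) (r-1))]
    exact mul_le_mul_of_nonneg_left
      (Real.rpow_le_rpow_of_nonpos hb2 (by linarith) (by linarith)) (abs_nonneg r)

/-- For `t > 0`, `q > 1`, the function `f(a) = ∑_{j ∈ ℤ} (a + (2tj)²)^{-q/2}` is strictly
completely monotone on `(0,∞)`: `(-1)^k f^{(k)}(a) > 0` for all `k ≥ 0` and `a > 0`. -/
theorem stmt_3 (t q : ℝ) (ht : 0 < t) (hq : 1 < q) :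
    ∀ (k : ℕ) (a : ℝ), 0 < a →
      0 < (-1 : ℝ) ^ k *
        iteratedDeriv k (fun a : ℝ => ∑' j : ℤ, (a + (2 * t * j) ^ 2) ^ (-q / 2)) a := by
  have key : ∀ (k : ℕ) (a : ℝ), 0 < a →
      iteratedDeriv k (fun a : ℝ => ∑' j : ℤ, (a + (2 * t * j) ^ 2) ^ (-q / 2)) a
        = (∏ i ∈ Finset.range k, (-q/2 - i)) *
          ∑' j : ℤ, (a + (2 * t * j) ^ 2) ^ (-q/2 - k) := by
    intro k
    induction k with
    | zero => intro a ha; simp [neg_div]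
    | succ k ih =>
      intro a ha
      rw [iteratedDeriv_succ]
      have hev : iteratedDeriv k (fun a : ℝ => ∑' j : ℤ, (a + (2 * t * j) ^ 2) ^ (-q / 2))
          =ᶠ[nhds a] fun x => (∏ i ∈ Finset.range k, (-q/2 - i)) *
            ∑' j : ℤ, (x + (2 * t * j) ^ 2) ^ (-q/2 - k) := by
        filter_upwards [isOpen_Ioi.mem_nhds (show a ∈ Set.Ioi (0:ℝ) from ha)] with x hx
        exact ih x hx
      rw [hev.deriv_eq]
      have hd := (hasDeriv_aux t ht q hq (-q/2 - k) (by
        have : (0:ℝ) ≤ (k:ℝ) := Nat.cast_nonneg k; linarith) a ha).const_mul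
        (∏ i ∈ Finset.range k, (-q/2 - i))
      rw [hd.deriv, tsum_mul_left, Finset.prod_range_succ]
      have hexp : (-q/2 - (k:ℝ)) - 1 = -q/2 - ((k:ℝ)+1) := by ring
      push_cast
      simp only [hexp]
      ring
  intro k a ha
  rw [key k a ha]
  have h1 : (-1 : ℝ)^k * ((∏ i ∈ Finset.range k, (-q/2 - i)) *
      ∑' j : ℤ, (a + (2 * t * j) ^ 2) ^ (-q/2 - k))
      = (∏ i ∈ Finset.range k, (q/2 + i)) *
      ∑' j : ℤ, (a + (2 * t * j) ^ 2) ^ (-q/2 - k) := by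
    rw [← mul_assoc]
    congr 1
    rw [show ((-1:ℝ))^k = ∏ _i ∈ Finset.range k, (-1:ℝ) by simp, ← Finset.prod_mul_distrib]
    apply Finset.prod_congr rfl
    intro i _
    ring
  rw [h1]
  have hsum := summable_aux t ht (-q/2 - k) (by
    have : (0:ℝ) ≤ (k:ℝ) := Nat.cast_nonneg k; linarith) a ha
  have htsum : 0 < ∑' j : ℤ, (a + (2 * t * j) ^ 2) ^ (-q/2 - k) := by
    refine Summable.tsum_pos hsum (fun j => Real.rpow_nonneg ?_ _) 0 ?_
    · have := sq_nonneg (2 * t * (j:ℝ)); linarith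
    · apply Real.rpow_pos_of_pos; simp; linarith
  have hprod : 0 < ∏ i ∈ Finset.range k, (q/2 + (i:ℝ)) := by
    apply Finset.prod_pos
    intro i _
    have : (0:ℝ) ≤ (i:ℝ) := Nat.cast_nonneg i
    linarith
  positivity
end

section
/- Fix q > 1. For every τ > 0, the Riemann sum with step size τ strictly exceeds the integral: ∑_{j ∈ ℤ} τ/(1 + (jτ)²)^{q/2} > ∫_ℝ (1 + s²)^{-q/2} ds. -/
/-!
Writing `(1 + x²)^(-a) = Γ(a)⁻¹ ∫₀^∞ u^(a-1) e^(-u) e^(-u x²) du` exhibits the integrand as the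
Laplace transform of the Gamma(a, 1) distribution at `x²`, i.e. as a mixture of Gaussians
`e^(-u x²)`. For one Gaussian, Jacobi's theta transformation (Poisson summation) gives
`τ ∑ⱼ e^(-u (jτ)²) = √(π/u) ∑ⱼ e^(-π² j² / (u τ²))`, which exceeds `√(π/u) = ∫ e^(-u x²) dx`
because every term of the dual series is positive and its `j = 0` term is already `1`.
Averaging over `u` keeps the inequality strict, and `a > 1/2` makes the integral finite.
-/

open Real MeasureTheory Set ProbabilityTheory
open scoped ENNReal

theorem Real.summable_exp_neg_mul_int_sq {b : ℝ} (hb : 0 < b) :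
    Summable fun n : ℤ => rexp (-b * n ^ 2) := by
  have hθ := ((summable_jacobiTheta₂_term_iff 0 ((b / π : ℝ) * Complex.I)).mpr
    (by simpa using div_pos hb pi_pos)).norm
  refine hθ.congr fun n => ?_
  rw [norm_jacobiTheta₂_term]
  simp only [Complex.mul_im, Complex.ofReal_re, Complex.I_im, Complex.ofReal_im, Complex.I_re,
    Complex.zero_im]
  field_simp
  ring_nf

theorem Real.summable_exp_neg_mul_int_mul_sq {b τ : ℝ} (hb : 0 < b) (hτ : 0 < τ) :
    Summable fun n : ℤ => rexp (-b * (n * τ) ^ 2) := by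
  refine (summable_exp_neg_mul_int_sq (mul_pos hb (pow_pos hτ 2))).congr fun n => ?_
  ring_nf

theorem Real.sqrt_pi_div_lt_tsum_exp_neg_mul_int_sq {b : ℝ} (hb : 0 < b) :
    √(π / b) < ∑' n : ℤ, rexp (-b * n ^ 2) := by
  have hbπ : 0 < b / π := div_pos hb pi_pos
  have hdual : 1 < ∑' n : ℤ, rexp (-(π ^ 2 / b) * n ^ 2) := by
    have hsum := summable_exp_neg_mul_int_sq (b := π ^ 2 / b) (by positivity)
    calc (1 : ℝ) < ∑ n ∈ ({0, 1} : Finset ℤ), rexp (-(π ^ 2 / b) * n ^ 2) := by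
          simp [exp_pos]
      _ ≤ _ := hsum.sum_le_tsum _ fun n _ => (exp_pos _).le
  have hpoisson := tsum_exp_neg_mul_int_sq hbπ
  rw [show -π * (b / π) = -b by field_simp, show -π / (b / π) = -(π ^ 2 / b) by field_simp,
    one_div, ← inv_rpow hbπ.le, inv_div, ← sqrt_eq_rpow] at hpoisson
  rw [hpoisson]
  exact lt_mul_right (by positivity) hdual

theorem Real.integral_gaussian_lt_mul_tsum {b τ : ℝ} (hb : 0 < b) (hτ : 0 < τ) :
    ∫ x : ℝ, rexp (-b * x ^ 2) < τ * ∑' n : ℤ, rexp (-b * (n * τ) ^ 2) := by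
  rw [integral_gaussian]
  calc √(π / b) = τ * √(π / (b * τ ^ 2)) := by
        rw [sqrt_div' _ (by positivity : 0 ≤ b * τ ^ 2), sqrt_mul hb.le, sqrt_sq hτ.le,
          sqrt_div' _ hb.le]
        field_simp
    _ < τ * ∑' n : ℤ, rexp (-(b * τ ^ 2) * n ^ 2) := by
        gcongr
        exact sqrt_pi_div_lt_tsum_exp_neg_mul_int_sq (by positivity)
    _ = τ * ∑' n : ℤ, rexp (-b * (n * τ) ^ 2) := by
        ring_nf

noncomputable def gaussianMixture (μ : Measure ℝ) (x : ℝ) : ℝ≥0∞ :=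
  ∫⁻ u, ENNReal.ofReal (rexp (-u * x ^ 2)) ∂μ

theorem lintegral_gaussianMixture_lt_tsum {μ : Measure ℝ} [SFinite μ] (hμ : μ ≠ 0)
    (hpos : ∀ᵐ u ∂μ, 0 < u) (hfin : ∫⁻ x, gaussianMixture μ x ≠ ∞) {τ : ℝ} (hτ : 0 < τ) :
    ∫⁻ x, gaussianMixture μ x < ∑' j : ℤ, ENNReal.ofReal τ * gaussianMixture μ (j * τ) := by
  have hmeas : Measurable fun p : ℝ × ℝ => ENNReal.ofReal (rexp (-p.2 * p.1 ^ 2)) := by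
    fun_prop
  simp_rw [gaussianMixture, ← lintegral_const_mul' _ _ ENNReal.ofReal_ne_top] at hfin ⊢
  rw [lintegral_lintegral_swap hmeas.aemeasurable] at hfin ⊢
  rw [← lintegral_tsum fun j => by fun_prop]
  refine lintegral_strict_mono hμ (by fun_prop) hfin ?_
  filter_upwards [hpos] with u hu
  simp_rw [← ENNReal.ofReal_mul hτ.le]
  rw [← ENNReal.ofReal_tsum_of_nonneg (fun _ => by positivity)
      ((summable_exp_neg_mul_int_mul_sq hu hτ).mul_left τ), tsum_mul_left,
    ← ofReal_integral_eq_lintegral_ofReal (integrable_exp_neg_mul_sq hu)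
      (ae_of_all _ fun _ => (exp_pos _).le),
    ENNReal.ofReal_lt_ofReal_iff_of_nonneg (integral_nonneg fun _ => (exp_pos _).le)]
  exact integral_gaussian_lt_mul_tsum hu hτ

theorem ProbabilityTheory.gammaMeasure_eq_withDensity_restrict (a r : ℝ) :
    gammaMeasure a r = (volume.restrict (Ioi 0)).withDensity
      fun u => ENNReal.ofReal (r ^ a / Gamma a * u ^ (a - 1) * rexp (-(r * u))) := by
  have hpdf : gammaPDF a r = (Ici 0).indicator
      fun u => ENNReal.ofReal (r ^ a / Gamma a * u ^ (a - 1) * rexp (-(r * u))) := by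
    ext u
    by_cases hu : 0 ≤ u
    · rw [indicator_of_mem (mem_Ici.mpr hu), gammaPDF_of_nonneg hu]
    · rw [indicator_of_notMem (by simpa using hu), gammaPDF_of_neg (not_le.mp hu)]
  rw [gammaMeasure, hpdf, withDensity_indicator measurableSet_Ici,
    Measure.restrict_congr_set Ioi_ae_eq_Ici]

theorem ProbabilityTheory.ae_pos_gammaMeasure (a r : ℝ) : ∀ᵐ u ∂gammaMeasure a r, 0 < u := by
  rw [gammaMeasure_eq_withDensity_restrict]
  exact (withDensity_absolutelyContinuous _ _).ae_le (ae_restrict_mem measurableSet_Ioi)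

theorem Real.integrableOn_rpow_mul_exp_neg_mul_Ioi {a c : ℝ} (ha : 0 < a) (hc : 0 < c) :
    IntegrableOn (fun u : ℝ => u ^ (a - 1) * rexp (-(c * u))) (Ioi 0) := by
  simpa using integrableOn_rpow_mul_exp_neg_mul_rpow (p := 1) (s := a - 1) (by linarith) one_pos hc

theorem ProbabilityTheory.lintegral_exp_neg_mul_gammaMeasure {a r t : ℝ} (ha : 0 < a)
    (hr : 0 < r) (ht : 0 < r + t) :
    ∫⁻ u, ENNReal.ofReal (rexp (-u * t)) ∂gammaMeasure a r =
      ENNReal.ofReal ((1 + t / r) ^ (-a)) := by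
  have hintegrand : ∀ u : ℝ, r ^ a / Gamma a * u ^ (a - 1) * rexp (-(r * u)) * rexp (-u * t) =
      r ^ a / Gamma a * (u ^ (a - 1) * rexp (-((r + t) * u))) := fun u => by
    rw [mul_assoc, mul_assoc, ← exp_add]
    ring_nf
  rw [gammaMeasure_eq_withDensity_restrict, lintegral_withDensity_eq_lintegral_mul_non_measurable
    _ (by fun_prop) (ae_of_all _ fun _ => ENNReal.ofReal_lt_top)]
  rw [setLIntegral_congr_fun measurableSet_Ioi (g := fun u => ENNReal.ofReal
    (r ^ a / Gamma a * (u ^ (a - 1) * rexp (-((r + t) * u))))) fun u (hu : 0 < u) => by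
      rw [Pi.mul_apply, ← ENNReal.ofReal_mul (by positivity), hintegrand]]
  rw [← ofReal_integral_eq_lintegral_ofReal
    ((integrableOn_rpow_mul_exp_neg_mul_Ioi ha ht).const_mul _)
    ((ae_restrict_iff' measurableSet_Ioi).mpr (ae_of_all _ fun u (hu : 0 < u) => by positivity)),
    integral_const_mul, integral_rpow_mul_exp_neg_mul_Ioi ha ht]
  congr 1
  have hΓ : Gamma a ≠ 0 := (Gamma_pos_of_pos ha).ne'
  rw [one_div, inv_rpow ht.le, ← rpow_neg ht.le, show 1 + t / r = (r + t) / r by field_simp,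
    div_rpow ht.le hr.le, rpow_neg hr.le]
  field_simp

theorem Real.integrable_one_add_sq_rpow_neg {a : ℝ} (ha : 1 / 2 < a) :
    Integrable fun x : ℝ => (1 + x ^ 2) ^ (-a) := by
  have := integrable_rpow_neg_one_add_norm_sq (E := ℝ) (μ := volume) (r := 2 * a)
    (by rw [Module.finrank_self, Nat.cast_one]; linarith)
  simpa [neg_div, mul_div_cancel_left₀ a two_ne_zero] using this

theorem Real.summable_one_add_int_mul_sq_rpow_neg {a τ : ℝ} (ha : 1 / 2 < a) (hτ : τ ≠ 0) :
    Summable fun j : ℤ => (1 + (j * τ) ^ 2) ^ (-a) := by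
  refine .of_norm_bounded_eventually
    ((summable_abs_int_rpow (b := 2 * a) (by linarith)).mul_left (|τ| ^ (-(2 * a)))) ?_
  filter_upwards [Filter.eventually_cofinite_ne 0] with j hj
  have hjτ : 0 < |(j : ℝ) * τ| := abs_pos.mpr (mul_ne_zero (Int.cast_ne_zero.mpr hj) hτ)
  rw [norm_of_nonneg (by positivity), ← mul_rpow (abs_nonneg _) (abs_nonneg _), mul_comm |τ|,
    ← abs_mul, show -(2 * a) = 2 * -a by ring, rpow_mul hjτ.le, rpow_two, sq_abs]
  exact rpow_le_rpow_of_nonpos (by positivity) (by linarith) (by linarith)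

theorem gaussianMixture_gammaMeasure {a : ℝ} (ha : 0 < a) (x : ℝ) :
    gaussianMixture (gammaMeasure a 1) x = ENNReal.ofReal ((1 + x ^ 2) ^ (-a)) := by
  simpa [gaussianMixture] using
    lintegral_exp_neg_mul_gammaMeasure (t := x ^ 2) ha one_pos (by positivity)

theorem Real.integral_one_add_sq_rpow_neg_lt_tsum {a τ : ℝ} (ha : 1 / 2 < a) (hτ : 0 < τ) :
    ∫ s : ℝ, (1 + s ^ 2) ^ (-a) < ∑' j : ℤ, τ * (1 + (j * τ) ^ 2) ^ (-a) := by
  have ha₀ : 0 < a := by linarith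
  have : IsProbabilityMeasure (gammaMeasure a 1) := isProbabilityMeasure_gammaMeasure ha₀ one_pos
  have hint := integrable_one_add_sq_rpow_neg ha
  have key := lintegral_gaussianMixture_lt_tsum (IsProbabilityMeasure.ne_zero _)
    (ae_pos_gammaMeasure a 1)
    (by simpa only [gaussianMixture_gammaMeasure ha₀] using hint.lintegral_lt_top.ne) hτ
  simp_rw [gaussianMixture_gammaMeasure ha₀, ← ENNReal.ofReal_mul hτ.le] at key
  rwa [← ofReal_integral_eq_lintegral_ofReal hint (ae_of_all _ fun _ => by positivity),
    ← ENNReal.ofReal_tsum_of_nonneg (fun _ => by positivity)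
      ((summable_one_add_int_mul_sq_rpow_neg ha hτ.ne').mul_left τ),
    ENNReal.ofReal_lt_ofReal_iff_of_nonneg (integral_nonneg fun _ => by positivity)] at key

/-- For `q > 1` and every `τ > 0`, the Riemann sum with step `τ` strictly exceeds the
integral: `∑_{j ∈ ℤ} τ/(1 + (jτ)²)^{q/2} > ∫_ℝ (1 + s²)^{-q/2} ds`. -/
theorem stmt_7 (q : ℝ) (hq : 1 < q) (τ : ℝ) (hτ : 0 < τ) :
    Summable (fun j : ℤ => τ / (1 + (j * τ) ^ 2) ^ (q / 2)) ∧
      (∫ s : ℝ, (1 + s ^ 2) ^ (-q / 2)) <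
        ∑' j : ℤ, τ / (1 + (j * τ) ^ 2) ^ (q / 2) := by
  have ha : 1 / 2 < q / 2 := by linarith
  have hterm (j : ℤ) : τ / (1 + (j * τ) ^ 2) ^ (q / 2) = τ * (1 + (j * τ) ^ 2) ^ (-(q / 2)) := by
    rw [rpow_neg (by positivity), div_eq_mul_inv]
  simp_rw [hterm, neg_div]
  exact ⟨(summable_one_add_int_mul_sq_rpow_neg ha hτ.ne').mul_left τ,
    integral_one_add_sq_rpow_neg_lt_tsum ha hτ⟩
end

section
/- Fix n ≥ 1, q > 1, t > 0. For all x̂ = (x,z), ŷ = (y,w) in ℝ^n × [-t,t] with x ≠ y, the strip kernel G_t(x̂,ŷ) = ∑_{j ∈ ℤ} (|x-y|² + (z - 2tj - (-1)^j w)²)^{-q/2} satisfies |G_t(x̂,ŷ) − (c_{q-1}/t)|x-y|^{1-q}| ≤ C_q |x-y|^{-q}, where c_{q-1} = (1/2)∫_ℝ (1+s²)^{-q/2} ds and C_q depends only on q. -/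
/-!
Write `r = ‖x - y‖`, `f u = (r² + u²)^(-q/2)` and `b j = 2tj + (-1)^j w - z`, so that the kernel is
`∑ f (b j)` and `|b j - 2tj| ≤ 2t`. The function `f` is integrable and decreasing in `|u|`, with
`∫ f = r^(1-q) ∫ (1+s²)^(-q/2)` after the substitution `u = r s`. Cutting `ℝ` into the cells
`(2tn, 2t(n+1)]`, each point `b j` with `|j| ≥ 2` dominates, in absolute value, a whole cell lying
between it and the origin, and each cell with index `n ∉ {-2, -1, 0}` dominates a point `b j`;
both assignments are injective. Hence `2t ∑ f (b j)` and `∫ f` differ by at most three cells or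
three terms, each at most `2t f 0 = 2t r^(-q)`.
-/

open Real MeasureTheory Set

section TsumComparison

variable {ι : Type*} {f g : ι → ℝ} {e : ι → ι}

lemma summable_of_le_comp_of_injOn_compl (s : Finset ι) (hf : 0 ≤ f) (hg : Summable g)
    (he : InjOn e (↑s)ᶜ) (hfg : ∀ i ∉ s, f i ≤ g (e i)) : Summable f := by
  rw [← Finset.summable_compl_iff s]
  exact (hg.comp_injective he.injective).of_nonneg_of_le (fun i => hf i) fun i => hfg i i.2

lemma tsum_le_card_mul_add_tsum_of_le_comp (s : Finset ι) {M : ℝ} (hf : 0 ≤ f)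
    (hfM : ∀ i ∈ s, f i ≤ M) (hg₀ : 0 ≤ g) (hg : Summable g) (he : InjOn e (↑s)ᶜ)
    (hfg : ∀ i ∉ s, f i ≤ g (e i)) : ∑' i, f i ≤ s.card * M + ∑' i, g i := by
  have hfs := summable_of_le_comp_of_injOn_compl s hf hg he hfg
  rw [← hfs.sum_add_tsum_compl]
  gcongr
  · simpa using Finset.sum_le_card_nsmul s f M hfM
  · exact hfs.subtype _ |>.tsum_le_tsum_of_inj _ he.injective (fun i _ => hg₀ i)
      (fun i => hfg i i.2) hg

end TsumComparison

lemma hasSum_setIntegral_Ioc_zsmul {E : Type*} [NormedAddCommGroup E] [NormedSpace ℝ E]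
    {μ : Measure ℝ} {f : ℝ → E} (hf : Integrable f μ) {p : ℝ} (hp : 0 < p) :
    HasSum (fun n : ℤ => ∫ x in Ioc (n • p) ((n + 1) • p), f x ∂μ) (∫ x, f x ∂μ) := by
  rw [← setIntegral_univ, ← iUnion_Ioc_zsmul hp]
  exact hasSum_integral_iUnion (fun _ => measurableSet_Ioc) (pairwise_disjoint_Ioc_zsmul p)
    hf.integrableOn

section Cells

variable {f : ℝ → ℝ} {h c : ℝ}

lemma mem_Ioc_zsmul_iff {n : ℤ} {x : ℝ} :
    x ∈ Ioc (n • h) ((n + 1) • h) ↔ n * h < x ∧ x ≤ (n + 1) * h := by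
  simp [zsmul_eq_mul]

lemma volume_real_Ioc_zsmul (hh : 0 < h) (n : ℤ) :
    volume.real (Ioc (n • h) ((n + 1) • h)) = h := by
  rw [add_zsmul, one_zsmul, Real.volume_real_Ioc_of_le (by linarith), add_sub_cancel_left]

lemma setIntegral_Ioc_zsmul_le (hh : 0 < h) (hf : Integrable f) (n : ℤ)
    (hfc : ∀ x ∈ Ioc (n • h) ((n + 1) • h), f x ≤ c) :
    ∫ x in Ioc (n • h) ((n + 1) • h), f x ≤ h * c := by
  have := setIntegral_mono_on hf.integrableOn (integrableOn_const (by simp)) measurableSet_Ioc hfc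
  rwa [setIntegral_const, volume_real_Ioc_zsmul hh, smul_eq_mul] at this

lemma mul_le_setIntegral_Ioc_zsmul (hh : 0 < h) (hf : Integrable f) (n : ℤ)
    (hcf : ∀ x ∈ Ioc (n • h) ((n + 1) • h), c ≤ f x) :
    h * c ≤ ∫ x in Ioc (n • h) ((n + 1) • h), f x := by
  have := setIntegral_mono_on (integrableOn_const (by simp)) hf.integrableOn measurableSet_Ioc hcf
  rwa [setIntegral_const, volume_real_Ioc_zsmul hh, smul_eq_mul] at this

end Cells

lemma abs_bounds_of_abs_sub_mul_le {v h : ℝ} {j : ℤ} (hh : 0 < h) (hv : |v - j * h| ≤ h) :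
    (|(j : ℝ)| - 1) * h ≤ |v| ∧ |v| ≤ (|(j : ℝ)| + 1) * h := by
  have hjh : |(j : ℝ) * h| = |(j : ℝ)| * h := by rw [abs_mul, abs_of_pos hh]
  constructor
  · have := abs_sub_abs_le_abs_sub (j * h) v
    rw [abs_sub_comm] at this
    linarith
  · have := abs_sub_abs_le_abs_sub v (j * h)
    linarith

def RadiallyAntitone (f : ℝ → ℝ) : Prop := ∀ ⦃u v : ℝ⦄, |u| ≤ |v| → f v ≤ f u

section RadialSum

variable {f : ℝ → ℝ} {h : ℝ} {b : ℤ → ℝ}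

lemma injOn_shift_toward_zero :
    InjOn (fun j : ℤ => if 0 < j then j - 2 else j + 1) (↑({-1, 0, 1} : Finset ℤ))ᶜ := by
  intro j hj k hk hjk
  simp only [Finset.coe_insert, Finset.coe_singleton, mem_compl_iff, mem_insert_iff,
    mem_singleton_iff, not_or] at hj hk
  simp only at hjk
  split_ifs at hjk <;> omega

lemma injOn_shift_away_from_zero :
    InjOn (fun n : ℤ => if 0 < n then n - 1 else n + 2) (↑({-2, -1, 0} : Finset ℤ))ᶜ := by
  intro j hj k hk hjk
  simp only [Finset.coe_insert, Finset.coe_singleton, mem_compl_iff, mem_insert_iff,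
    mem_singleton_iff, not_or] at hj hk
  simp only at hjk
  split_ifs at hjk <;> omega

lemma le_setIntegral_shift_toward_zero_div (hf : RadiallyAntitone f) (hfi : Integrable f)
    (hh : 0 < h) (hb : ∀ j : ℤ, |b j - j * h| ≤ h) {j : ℤ} (hj : j ∉ ({-1, 0, 1} : Finset ℤ)) :
    f (b j) ≤ (∫ x in Ioc ((if 0 < j then j - 2 else j + 1) • h)
      (((if 0 < j then j - 2 else j + 1) + 1) • h), f x) / h := by
  simp only [Finset.mem_insert, Finset.mem_singleton, not_or] at hj
  rw [le_div_iff₀ hh, mul_comm]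
  refine mul_le_setIntegral_Ioc_zsmul hh hfi _ fun x hx => hf ?_
  rw [mem_Ioc_zsmul_iff] at hx
  have hbj := (abs_bounds_of_abs_sub_mul_le hh (hb j)).1
  split_ifs at hx with hj0
  · have : (2 : ℝ) ≤ j := by exact_mod_cast (by omega : (2 : ℤ) ≤ j)
    push_cast at hx
    rw [abs_of_nonneg (by linarith : (0 : ℝ) ≤ j)] at hbj
    have : 0 ≤ ((j : ℝ) - 2) * h := mul_nonneg (by linarith) hh.le
    rw [abs_le]; constructor <;> linarith [abs_nonneg (b j)]
  · have : (j : ℝ) ≤ -2 := by exact_mod_cast (by omega : j ≤ -2)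
    push_cast at hx
    rw [abs_of_nonpos (by linarith : (j : ℝ) ≤ 0)] at hbj
    have : ((j : ℝ) + 2) * h ≤ 0 := mul_nonpos_of_nonpos_of_nonneg (by linarith) hh.le
    rw [abs_le]; constructor <;> linarith [abs_nonneg (b j)]

lemma setIntegral_div_le_shift_away_from_zero (hf : RadiallyAntitone f) (hfi : Integrable f)
    (hh : 0 < h) (hb : ∀ j : ℤ, |b j - j * h| ≤ h) {n : ℤ} (hn : n ∉ ({-2, -1, 0} : Finset ℤ)) :
    (∫ x in Ioc (n • h) ((n + 1) • h), f x) / h ≤ f (b (if 0 < n then n - 1 else n + 2)) := by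
  simp only [Finset.mem_insert, Finset.mem_singleton, not_or] at hn
  rw [div_le_iff₀ hh, mul_comm]
  refine setIntegral_Ioc_zsmul_le hh hfi _ fun x hx => hf ?_
  rw [mem_Ioc_zsmul_iff] at hx
  have hbn := (abs_bounds_of_abs_sub_mul_le hh (hb (if 0 < n then n - 1 else n + 2))).2
  split_ifs at hbn ⊢ with hn0
  · have : (1 : ℝ) ≤ n := by exact_mod_cast (by omega : (1 : ℤ) ≤ n)
    push_cast at hbn
    rw [abs_of_nonneg (by linarith : (0 : ℝ) ≤ n - 1)] at hbn
    have : 0 ≤ ((n : ℝ) - 1) * h := mul_nonneg (by linarith) hh.le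
    rw [abs_of_pos (a := x) (by linarith)]; linarith
  · have : (n : ℝ) ≤ -3 := by exact_mod_cast (by omega : n ≤ -3)
    push_cast at hbn
    rw [abs_of_nonpos (by linarith : (n : ℝ) + 2 ≤ 0)] at hbn
    have : ((n : ℝ) + 2) * h ≤ 0 := mul_nonpos_of_nonpos_of_nonneg (by linarith) hh.le
    rw [abs_of_neg (a := x) (by linarith)]; linarith

lemma summable_comp_of_abs_sub_mul_le (hf₀ : 0 ≤ f) (hf : RadiallyAntitone f)
    (hfi : Integrable f) (hh : 0 < h) (hb : ∀ j : ℤ, |b j - j * h| ≤ h) :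
    Summable fun j => f (b j) :=
  summable_of_le_comp_of_injOn_compl _ (fun _ => hf₀ _)
    ((hasSum_setIntegral_Ioc_zsmul hfi hh).div_const h).summable injOn_shift_toward_zero
    fun _ hj => le_setIntegral_shift_toward_zero_div hf hfi hh hb hj

lemma tsum_le_three_mul_add_integral_div (hf₀ : 0 ≤ f) (hf : RadiallyAntitone f)
    (hfi : Integrable f) (hh : 0 < h) (hb : ∀ j : ℤ, |b j - j * h| ≤ h) :
    ∑' j, f (b j) ≤ 3 * f 0 + (∫ u, f u) / h := by
  have hI := (hasSum_setIntegral_Ioc_zsmul hfi hh).div_const h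
  rw [← hI.tsum_eq, show (3 : ℝ) = ({-1, 0, 1} : Finset ℤ).card by rfl]
  exact tsum_le_card_mul_add_tsum_of_le_comp (f := fun j => f (b j)) _ (fun _ => hf₀ _)
    (fun _ _ => hf (by simp))
    (fun n => div_nonneg (setIntegral_nonneg measurableSet_Ioc fun x _ => hf₀ x) hh.le)
    hI.summable injOn_shift_toward_zero fun _ hj =>
      le_setIntegral_shift_toward_zero_div hf hfi hh hb hj

lemma integral_div_le_three_mul_add_tsum (hf₀ : 0 ≤ f) (hf : RadiallyAntitone f)
    (hfi : Integrable f) (hh : 0 < h) (hb : ∀ j : ℤ, |b j - j * h| ≤ h) :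
    (∫ u, f u) / h ≤ 3 * f 0 + ∑' j, f (b j) := by
  have hI := (hasSum_setIntegral_Ioc_zsmul hfi hh).div_const h
  rw [← hI.tsum_eq, show (3 : ℝ) = ({-2, -1, 0} : Finset ℤ).card by rfl]
  refine tsum_le_card_mul_add_tsum_of_le_comp (g := fun j => f (b j)) _
    (fun n => div_nonneg (setIntegral_nonneg measurableSet_Ioc fun x _ => hf₀ x) hh.le)
    (fun n _ => ?_) (fun _ => hf₀ _) (summable_comp_of_abs_sub_mul_le hf₀ hf hfi hh hb)
    injOn_shift_away_from_zero fun _ hn =>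
      setIntegral_div_le_shift_away_from_zero hf hfi hh hb hn
  rw [div_le_iff₀ hh, mul_comm]
  exact setIntegral_Ioc_zsmul_le hh hfi n fun x _ => hf (by simp)

theorem abs_tsum_sub_integral_div_le (hf₀ : 0 ≤ f) (hf : RadiallyAntitone f)
    (hfi : Integrable f) (hh : 0 < h) (hb : ∀ j : ℤ, |b j - j * h| ≤ h) :
    |∑' j, f (b j) - (∫ u, f u) / h| ≤ 3 * f 0 := by
  rw [abs_le]
  constructor
  · linarith [integral_div_le_three_mul_add_tsum hf₀ hf hfi hh hb]
  · linarith [tsum_le_three_mul_add_integral_div hf₀ hf hfi hh hb]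

end RadialSum

section PowerKernel

variable {q r : ℝ}

lemma sq_add_sq_rpow_eq (hr : 0 < r) (u : ℝ) :
    (r ^ 2 + u ^ 2) ^ (-q / 2) = r ^ (-q) * (1 + (u / r) ^ 2) ^ (-q / 2) := by
  rw [show r ^ 2 + u ^ 2 = r ^ 2 * (1 + (u / r) ^ 2) by field_simp,
    mul_rpow (by positivity) (by positivity), ← rpow_natCast, ← rpow_mul hr.le]
  congr 2
  ring

lemma radiallyAntitone_sq_add_sq_rpow (hq : 0 ≤ q) (hr : 0 < r) :
    RadiallyAntitone fun u => (r ^ 2 + u ^ 2) ^ (-q / 2) := fun _ _ huv =>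
  rpow_le_rpow_of_nonpos (by positivity) (by linarith [sq_le_sq.mpr huv]) (by linarith)

lemma integrable_one_add_sq_rpow_neg (hq : 1 < q) :
    Integrable fun s : ℝ => (1 + s ^ 2) ^ (-q / 2) := by
  simpa [sq_abs] using integrable_rpow_neg_one_add_norm_sq (E := ℝ) (r := q) (by simpa using hq)

lemma integrable_sq_add_sq_rpow_neg (hq : 1 < q) (hr : 0 < r) :
    Integrable fun u : ℝ => (r ^ 2 + u ^ 2) ^ (-q / 2) := by
  simp_rw [sq_add_sq_rpow_eq hr]
  exact ((integrable_one_add_sq_rpow_neg hq).comp_div hr.ne').const_mul _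

lemma integral_sq_add_sq_rpow_neg (hr : 0 < r) :
    ∫ u : ℝ, (r ^ 2 + u ^ 2) ^ (-q / 2) = r ^ (1 - q) * ∫ s : ℝ, (1 + s ^ 2) ^ (-q / 2) := by
  simp_rw [sq_add_sq_rpow_eq hr]
  rw [integral_const_mul, Measure.integral_comp_div (fun s => (1 + s ^ 2) ^ (-q / 2)),
    abs_of_pos hr, smul_eq_mul, ← mul_assoc, ← rpow_add_one hr.ne']
  ring_nf

end PowerKernel

/-- Two-sided bound of the strip kernel by the horizontal `(q-1)`-Riesz kernel (case `q > 1`):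
there is `C_q` depending only on `q` such that for all `n ≥ 1`, `t > 0`, `x ≠ y` in `ℝⁿ` and
`z, w ∈ [-t,t]`, `|G_t(x̂,ŷ) − (c_{q-1}/t)|x-y|^{1-q}| ≤ C_q |x-y|^{-q}`, where
`c_{q-1} = (1/2)∫_ℝ (1+s²)^{-q/2} ds`. -/
theorem stmt_13 (q : ℝ) (hq : 1 < q) :
    ∃ C : ℝ, ∀ (n : ℕ), 1 ≤ n → ∀ t : ℝ, 0 < t →
      ∀ (x y : EuclideanSpace ℝ (Fin n)), x ≠ y →
      ∀ z w : ℝ, z ∈ Set.Icc (-t) t → w ∈ Set.Icc (-t) t →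
        |(∑' j : ℤ,
              (‖x - y‖ ^ 2 + (z - 2 * t * j - (-1 : ℝ) ^ j * w) ^ 2) ^ (-q / 2)) -
            ((1 / 2) * ∫ s : ℝ, (1 + s ^ 2) ^ (-q / 2)) / t * ‖x - y‖ ^ (1 - q)| ≤
          C * ‖x - y‖ ^ (-q) := by
  refine ⟨3, fun n _ t ht x y hxy z w hz hw => ?_⟩
  have hr : 0 < ‖x - y‖ := norm_sub_pos_iff.mpr hxy
  have hb (j : ℤ) : |-(z - 2 * t * j - (-1 : ℝ) ^ j * w) - j * (2 * t)| ≤ 2 * t := by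
    rw [show -(z - 2 * t * j - (-1 : ℝ) ^ j * w) - j * (2 * t) = (-1 : ℝ) ^ j * w - z by ring]
    calc |(-1 : ℝ) ^ j * w - z| ≤ |(-1 : ℝ) ^ j * w| + |z| := abs_sub _ _
      _ = |w| + |z| := by rw [abs_mul, abs_neg_one_zpow, one_mul]
      _ ≤ 2 * t := by linarith [abs_le.mpr hw, abs_le.mpr hz]
  have key := abs_tsum_sub_integral_div_le (fun _ => by positivity)
    (radiallyAntitone_sq_add_sq_rpow (by linarith) hr)
    (integrable_sq_add_sq_rpow_neg hq hr) (by positivity) hb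
  rw [sq_add_sq_rpow_eq hr 0, zero_div, zero_pow two_ne_zero, add_zero, one_rpow, mul_one,
    integral_sq_add_sq_rpow_neg hr] at key
  simp only [neg_sq] at key
  convert key using 3
  ring
end

section
/- Fix q ≥ 1 and a compact set K ⊂ ℝ^{n+1}. For 0 < t with K ⊂ S(t) = ℝ^n × (-t,t), write G_t = G_∞ + H_t where G_∞(x̂,ŷ) = |x̂-ŷ|^{-q}. Then H_t(x̂,ŷ) is bounded uniformly for x̂, ŷ ∈ K, and H_t → 0 uniformly on K × K as t → ∞; consequently the strip energies satisfy: E_K(t₁) < ∞ if and only if E_K(t₂) < ∞ for any t₁, t₂ ∈ (t₀, ∞], and E_K(t) → V_q(K) as t → ∞, where E_K(t) = min over probability measures μ on K of ∬ G_t dμ dμ and V_q(K) = min of ∬ |x̂-ŷ|^{-q} dμ dμ. -/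
open Real MeasureTheory Filter Topology Classical

/-- Points of the strip `S(t) ⊂ ℝⁿ × ℝ`. -/
abbrev StripPt (n : ℕ) := EuclideanSpace ℝ (Fin n) × ℝ

/-- Squared distance from `x̂` to the `j`-th reflected copy `ρ_j(ŷ) = (y, 2tj + (-1)^j w)`. -/
noncomputable def reflSq (n : ℕ) (t : ℝ) (j : ℤ) (p p' : StripPt n) : ℝ :=
  ‖p.1 - p'.1‖ ^ 2 + (p.2 - (2 * t * j + (-1 : ℝ) ^ j * p'.2)) ^ 2

/-- The whole-space Riesz kernel `G_∞(x̂,ŷ) = |x̂ - ŷ|^{-q}`. -/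
noncomputable def GinfK (n : ℕ) (q : ℝ) (p p' : StripPt n) : ℝ :=
  (‖p.1 - p'.1‖ ^ 2 + (p.2 - p'.2) ^ 2) ^ (-q / 2)

/-- The remainder `H_t = G_t − G_∞` of the strip kernel: for `q > 1` the sum of the reflected
Riesz terms over `j ≠ 0`, and for `q = 1` its renormalized version. -/
noncomputable def HK (n : ℕ) (q t : ℝ) (p p' : StripPt n) : ℝ :=
  if 1 < q then ∑' j : {j : ℤ // j ≠ 0}, (reflSq n t j p p') ^ (-q / 2)
  else (∑' j : {j : ℤ // j ≠ 0},
          ((reflSq n t j p p') ^ (-(1 : ℝ) / 2) - (2 * t * |(j : ℤ)|)⁻¹)) +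
        (Real.eulerMascheroniConstant - Real.log (4 * t)) / t

/-- The strip kernel `G_t = G_∞ + H_t`. -/
noncomputable def GK (n : ℕ) (q t : ℝ) (p p' : StripPt n) : ℝ :=
  GinfK n q p p' + HK n q t p p'

/-- The energy of a probability measure `μ` with respect to a kernel `k`, valued in `EReal`:
it is the double integral when the diagonal is `μ×μ`-null and the kernel is integrable, and
`+∞` otherwise. -/

noncomputable def measEnergy (n : ℕ) (k : StripPt n → StripPt n → ℝ)
    (μ : Measure (StripPt n)) : EReal :=
  if (μ.prod μ) {p : StripPt n × StripPt n | p.1 = p.2} = 0 ∧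
      Integrable (fun p : StripPt n × StripPt n => k p.1 p.2) (μ.prod μ)
  then ((∫ p : StripPt n × StripPt n, k p.1 p.2 ∂(μ.prod μ) : ℝ) : EReal)
  else ⊤

/-- The energy of a set `K` with respect to a kernel `k`: the infimum of `measEnergy` over
probability measures supported in `K`. -/
noncomputable def setEnergy (n : ℕ) (k : StripPt n → StripPt n → ℝ)
    (K : Set (StripPt n)) : EReal :=
  ⨅ (μ : Measure (StripPt n)) (_ : IsProbabilityMeasure μ) (_ : μ Kᶜ = 0),
    measEnergy n k μ

/-!
For `p, p'` in `K` the `j`-th reflected copy of `p'` lies at distance `2t|j| + O(1)` from `p`,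
and, since `K` stays a fixed margin away from the boundary of `S(t₀)`, at distance at least
`2ct|j|` for some `c > 0`. Hence for `q > 1` the terms of `H_t` are dominated by
`(2ct)^{-q} |j|^{-q}`, and for `q = 1` the renormalized terms by `O(t^{-2} j^{-2})`, leaving only
the correction `(γ - log 4t)/t`. Both majorants tend to `0`, and by the Weierstrass M-test `H_t`
is continuous on `K × K`, hence integrable against `μ × μ`. The energies of `G_t = G_∞ + H_t`
and `G_∞` therefore differ by at most `sup_{K × K} |H_t|` for every probability measure on `K`.
-/

lemma reflSq_nonneg (n : ℕ) (t : ℝ) (j : ℤ) (p p' : StripPt n) : 0 ≤ reflSq n t j p p' := by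
  unfold reflSq; positivity

lemma reflSq_rpow_neg_half {n : ℕ} {t : ℝ} {j : ℤ} {p p' : StripPt n} (q : ℝ) :
    reflSq n t j p p' ^ (-q / 2) = √(reflSq n t j p p') ^ (-q) := by
  rw [Real.sqrt_eq_rpow, ← Real.rpow_mul (reflSq_nonneg n t j p p')]
  ring_nf

section ReflectedDistance

variable {n : ℕ} {t : ℝ} {j : ℤ} {p p' : StripPt n}

lemma abs_vertical_reflection_sub_le (ht : 0 ≤ t) :
    |(|p.2 - (2 * t * j + (-1 : ℝ) ^ j * p'.2)| - 2 * t * |(j : ℝ)|)| ≤ |p.2| + |p'.2| := by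
  have hσ : |(-1 : ℝ) ^ j * p'.2| = |p'.2| := by rw [abs_mul, abs_neg_one_zpow, one_mul]
  have h2tj : |2 * t * (j : ℝ)| = 2 * t * |(j : ℝ)| := by
    rw [abs_mul, abs_of_nonneg (by linarith : (0 : ℝ) ≤ 2 * t)]
  rw [← h2tj]
  calc |(|p.2 - (2 * t * j + (-1 : ℝ) ^ j * p'.2)| - |2 * t * (j : ℝ)|)|
      ≤ |p.2 - (2 * t * j + (-1 : ℝ) ^ j * p'.2) + 2 * t * j| := by
        simpa using abs_abs_sub_abs_le_abs_sub (p.2 - (2 * t * j + (-1 : ℝ) ^ j * p'.2))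
          (-(2 * t * j))
    _ = |p.2 - (-1 : ℝ) ^ j * p'.2| := by ring_nf
    _ ≤ |p.2| + |p'.2| := hσ ▸ abs_sub _ _

lemma sub_le_sqrt_reflSq (ht : 0 ≤ t) :
    2 * t * |(j : ℝ)| - (|p.2| + |p'.2|) ≤ √(reflSq n t j p p') := by
  have hd := (abs_le.mp (abs_vertical_reflection_sub_le (j := j) (p := p) (p' := p') ht)).1
  have : |p.2 - (2 * t * j + (-1 : ℝ) ^ j * p'.2)| ≤ √(reflSq n t j p p') :=
    Real.abs_le_sqrt (by unfold reflSq; nlinarith [sq_nonneg ‖p.1 - p'.1‖])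
  linarith

lemma sqrt_reflSq_le (ht : 0 ≤ t) :
    √(reflSq n t j p p') ≤ 2 * t * |(j : ℝ)| + (‖p.1 - p'.1‖ + |p.2| + |p'.2|) := by
  set d := p.2 - (2 * t * j + (-1 : ℝ) ^ j * p'.2)
  have hd := (abs_le.mp (abs_vertical_reflection_sub_le (j := j) (p := p) (p' := p') ht)).2
  have hsq : √(reflSq n t j p p') ≤ ‖p.1 - p'.1‖ + |d| := by
    rw [Real.sqrt_le_left (by positivity)]
    unfold reflSq
    nlinarith [sq_abs d, norm_nonneg (p.1 - p'.1), abs_nonneg d]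
  linarith

end ReflectedDistance

section ReflectedTerms

variable {n : ℕ} {t c M D : ℝ} {j : ℤ} {p p' : StripPt n}

lemma mul_abs_le_sqrt_reflSq (ht : 0 ≤ t) (hj : j ≠ 0) (hMt : M ≤ (1 - c) * t)
    (hp : |p.2| ≤ M) (hp' : |p'.2| ≤ M) :
    2 * c * t * |(j : ℝ)| ≤ √(reflSq n t j p p') := by
  have hj1 : (1 : ℝ) ≤ |(j : ℝ)| := by rw [← Int.cast_abs]; exact_mod_cast Int.one_le_abs hj
  have hM : 0 ≤ M := (abs_nonneg _).trans hp
  nlinarith [sub_le_sqrt_reflSq (j := j) (p := p) (p' := p') ht]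

lemma sqrt_reflSq_pos (hc : 0 < c) (ht : 0 < t) (hj : j ≠ 0) (hMt : M ≤ (1 - c) * t)
    (hp : |p.2| ≤ M) (hp' : |p'.2| ≤ M) : 0 < √(reflSq n t j p p') :=
  lt_of_lt_of_le (by positivity) (mul_abs_le_sqrt_reflSq ht.le hj hMt hp hp')

lemma reflSq_rpow_neg_le {q : ℝ} (hq : 0 ≤ q) (hc : 0 < c) (ht : 0 < t) (hj : j ≠ 0)
    (hMt : M ≤ (1 - c) * t) (hp : |p.2| ≤ M) (hp' : |p'.2| ≤ M) :
    reflSq n t j p p' ^ (-q / 2) ≤ (2 * c * t) ^ (-q) * |(j : ℝ)| ^ (-q) := by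
  rw [reflSq_rpow_neg_half, ← Real.mul_rpow (by positivity) (abs_nonneg _)]
  have hpos : 0 < 2 * c * t * |(j : ℝ)| := by positivity
  exact Real.rpow_le_rpow_of_nonpos hpos (mul_abs_le_sqrt_reflSq ht.le hj hMt hp hp')
    (neg_nonpos.mpr hq)

lemma abs_reflSq_rpow_sub_inv_le (hc : 0 < c) (ht : 0 < t) (hj : j ≠ 0)
    (hMt : M ≤ (1 - c) * t) (hp : |p.2| ≤ M) (hp' : |p'.2| ≤ M) (hD : ‖p.1 - p'.1‖ ≤ D) :
    |reflSq n t j p p' ^ (-(1 : ℝ) / 2) - (2 * t * |(j : ℝ)|)⁻¹| ≤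
      (2 * M + D) / (4 * c * t ^ 2) * ((j : ℝ) ^ 2)⁻¹ := by
  set s := √(reflSq n t j p p')
  set m := 2 * t * |(j : ℝ)|
  have hsa : 2 * c * t * |(j : ℝ)| ≤ s := mul_abs_le_sqrt_reflSq ht.le hj hMt hp hp'
  have hs : 0 < s := sqrt_reflSq_pos hc ht hj hMt hp hp'
  have hm : 0 < m := by positivity
  have hms : |m - s| ≤ 2 * M + D := by
    rw [abs_sub_comm, abs_sub_le_iff]
    constructor
    · linarith [sqrt_reflSq_le (j := j) (p := p) (p' := p') ht.le]
    · linarith [sub_le_sqrt_reflSq (j := j) (p := p) (p' := p') ht.le,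
        norm_nonneg (p.1 - p'.1)]
  rw [reflSq_rpow_neg_half, Real.rpow_neg_one, inv_sub_inv hs.ne' hm.ne', abs_div,
    abs_of_pos (mul_pos hs hm)]
  calc |m - s| / (s * m) ≤ (2 * M + D) / (2 * c * t * |(j : ℝ)| * m) :=
        div_le_div₀ ((abs_nonneg _).trans hms) hms (by positivity)
          (mul_le_mul_of_nonneg_right hsa hm.le)
    _ = (2 * M + D) / (4 * c * t ^ 2) * ((j : ℝ) ^ 2)⁻¹ := by
        rw [← sq_abs (j : ℝ)]
        field_simp
        ring

end ReflectedTerms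

lemma summable_abs_rpow_neg_ne_zero {q : ℝ} (hq : 1 < q) :
    Summable fun j : {j : ℤ // j ≠ 0} => |(j : ℝ)| ^ (-q) :=
  (Real.summable_abs_int_rpow hq).subtype _

lemma summable_inv_sq_ne_zero : Summable fun j : {j : ℤ // j ≠ 0} => ((j : ℝ) ^ 2)⁻¹ := by
  have h : Summable fun j : ℤ => ((j : ℝ) ^ 2)⁻¹ := by
    simpa [one_div] using (summable_one_div_int_pow (p := 2)).mpr one_lt_two
  exact h.subtype _

section RemainderOnCompact

variable {n : ℕ} {K : Set (StripPt n)} {q t c M D : ℝ}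

lemma HK_of_one_lt (hq : 1 < q) (p p' : StripPt n) :
    HK n q t p p' = ∑' j : {j : ℤ // j ≠ 0}, reflSq n t j p p' ^ (-q / 2) :=
  if_pos hq

lemma HK_one (p p' : StripPt n) :
    HK n 1 t p p' = (∑' j : {j : ℤ // j ≠ 0},
      (reflSq n t j p p' ^ (-(1 : ℝ) / 2) - (2 * t * |(j : ℝ)|)⁻¹)) +
        (eulerMascheroniConstant - log (4 * t)) / t := by
  rw [HK, if_neg (lt_irrefl 1)]
  push_cast
  rfl

variable (hc : 0 < c) (ht : 0 < t) (hMt : M ≤ (1 - c) * t) (hM : ∀ p ∈ K, |p.2| ≤ M)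
include hc ht hMt hM

lemma continuousOn_reflSq_rpow (j : {j : ℤ // j ≠ 0}) (r : ℝ) :
    ContinuousOn (fun x : StripPt n × StripPt n => reflSq n t j x.1 x.2 ^ r) (K ×ˢ K) := by
  have hcont : Continuous fun x : StripPt n × StripPt n => reflSq n t j x.1 x.2 := by
    unfold reflSq; fun_prop
  refine hcont.continuousOn.rpow_const fun x hx => Or.inl ?_
  exact (Real.sqrt_pos.mp (sqrt_reflSq_pos hc ht j.2 hMt (hM _ hx.1) (hM _ hx.2))).ne'

lemma abs_HK_le_of_one_lt (hq : 1 < q) {p p' : StripPt n} (hp : p ∈ K) (hp' : p' ∈ K) :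
    |HK n q t p p'| ≤ (2 * c * t) ^ (-q) * ∑' j : {j : ℤ // j ≠ 0}, |(j : ℝ)| ^ (-q) := by
  rw [HK_of_one_lt hq, ← tsum_mul_left, ← Real.norm_eq_abs]
  refine tsum_of_norm_bounded ((summable_abs_rpow_neg_ne_zero hq).mul_left _).hasSum fun j => ?_
  rw [Real.norm_eq_abs, abs_of_nonneg (Real.rpow_nonneg (reflSq_nonneg ..) _)]
  exact reflSq_rpow_neg_le (by linarith) hc ht j.2 hMt (hM p hp) (hM p' hp')

lemma continuousOn_HK_of_one_lt (hq : 1 < q) :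
    ContinuousOn (fun x : StripPt n × StripPt n => HK n q t x.1 x.2) (K ×ˢ K) := by
  simp only [HK_of_one_lt hq]
  refine continuousOn_tsum (fun j => continuousOn_reflSq_rpow hc ht hMt hM j _)
    ((summable_abs_rpow_neg_ne_zero hq).mul_left ((2 * c * t) ^ (-q))) fun j x hx => ?_
  rw [Real.norm_eq_abs, abs_of_nonneg (Real.rpow_nonneg (reflSq_nonneg ..) _)]
  exact reflSq_rpow_neg_le (by linarith) hc ht j.2 hMt (hM _ hx.1) (hM _ hx.2)

variable (hD : ∀ p ∈ K, ∀ p' ∈ K, ‖p.1 - p'.1‖ ≤ D)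
include hD

lemma abs_HK_one_le {p p' : StripPt n} (hp : p ∈ K) (hp' : p' ∈ K) :
    |HK n 1 t p p'| ≤ (2 * M + D) / (4 * c * t ^ 2) *
      (∑' j : {j : ℤ // j ≠ 0}, ((j : ℝ) ^ 2)⁻¹) +
        |eulerMascheroniConstant - log (4 * t)| / t := by
  rw [HK_one, ← tsum_mul_left, ← abs_of_pos ht, ← abs_div, abs_of_pos ht]
  refine (abs_add_le _ _).trans (add_le_add_left ?_ _)
  rw [← Real.norm_eq_abs]
  refine tsum_of_norm_bounded (summable_inv_sq_ne_zero.mul_left _).hasSum fun j => ?_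
  exact abs_reflSq_rpow_sub_inv_le hc ht j.2 hMt (hM p hp) (hM p' hp') (hD p hp p' hp')

lemma continuousOn_HK_one :
    ContinuousOn (fun x : StripPt n × StripPt n => HK n 1 t x.1 x.2) (K ×ˢ K) := by
  simp only [HK_one]
  refine ContinuousOn.add ?_ continuousOn_const
  refine continuousOn_tsum
    (fun j => (continuousOn_reflSq_rpow hc ht hMt hM j _).sub continuousOn_const)
    (summable_inv_sq_ne_zero.mul_left ((2 * M + D) / (4 * c * t ^ 2))) fun j x hx => ?_
  exact abs_reflSq_rpow_sub_inv_le hc ht j.2 hMt (hM _ hx.1) (hM _ hx.2) (hD _ hx.1 _ hx.2)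

end RemainderOnCompact

lemma abs_log_le_add_inv {x : ℝ} (hx : 0 < x) : |log x| ≤ x + x⁻¹ := by
  have h₁ := log_le_self hx.le
  have h₂ := log_le_self (inv_nonneg.mpr hx.le)
  rw [log_inv] at h₂
  rw [abs_le]
  constructor <;> linarith [inv_pos.mpr hx]

lemma abs_sub_log_mul_div_le {a b t₀ t : ℝ} (hb : 0 < b) (ht₀ : 0 < t₀) (ht : t₀ ≤ t) :
    |a - log (b * t)| / t ≤ |a| / t₀ + b + (b * t₀ ^ 2)⁻¹ := by
  have ht' : 0 < t := ht₀.trans_le ht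
  calc |a - log (b * t)| / t ≤ (|a| + (b * t + (b * t)⁻¹)) / t := by
        gcongr
        exact (abs_sub _ _).trans (add_le_add le_rfl (abs_log_le_add_inv (by positivity)))
    _ = |a| / t + b + (b * t ^ 2)⁻¹ := by field_simp; ring
    _ ≤ |a| / t₀ + b + (b * t₀ ^ 2)⁻¹ := by gcongr

lemma tendsto_abs_sub_log_mul_div_atTop (a : ℝ) {b : ℝ} (hb : 0 < b) :
    Tendsto (fun t => |a - log (b * t)| / t) atTop (𝓝 0) := by
  have hlog : Tendsto (fun t => log t / t) atTop (𝓝 0) := by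
    simpa using tendsto_pow_log_div_mul_add_atTop 1 0 1 one_ne_zero
  have h : Tendsto (fun t => |a / t - b * (log (b * t) / (b * t))|) atTop (𝓝 0) := by
    simpa using ((tendsto_const_nhds.div_atTop tendsto_id).sub
      ((hlog.comp (tendsto_id.const_mul_atTop hb)).const_mul b)).abs
  refine h.congr' ?_
  filter_upwards [eventually_gt_atTop 0] with t ht
  rw [← abs_of_pos ht, ← abs_div, abs_of_pos ht]
  congr 1
  field_simp

lemma exists_pos_le_one_sub_mul {M t₀ : ℝ} (hM : 0 ≤ M) (hMt₀ : M < t₀) :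
    ∃ c > 0, ∀ t, t₀ ≤ t → M ≤ (1 - c) * t := by
  have ht₀ : 0 < t₀ := hM.trans_lt hMt₀
  refine ⟨1 - M / t₀, sub_pos.mpr ((div_lt_one ht₀).mpr hMt₀), fun t ht => ?_⟩
  rw [sub_sub_cancel, div_mul_eq_mul_div, le_div_iff₀ ht₀]
  exact mul_le_mul_of_nonneg_left ht hM

section RemainderUniform

variable {n : ℕ} {K : Set (StripPt n)} {q t₀ M D : ℝ}

lemma continuousOn_HK (hq : 1 ≤ q) (hM0 : 0 ≤ M) (hMt₀ : M < t₀) (hM : ∀ p ∈ K, |p.2| ≤ M)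
    (hD : ∀ p ∈ K, ∀ p' ∈ K, ‖p.1 - p'.1‖ ≤ D) {t : ℝ} (ht : t₀ ≤ t) :
    ContinuousOn (fun x : StripPt n × StripPt n => HK n q t x.1 x.2) (K ×ˢ K) := by
  obtain ⟨c, hc, hMt⟩ := exists_pos_le_one_sub_mul hM0 hMt₀
  have ht' : 0 < t := hM0.trans_lt (hMt₀.trans_le ht)
  rcases hq.lt_or_eq with hq | rfl
  · exact continuousOn_HK_of_one_lt hc ht' (hMt t ht) hM hq
  · exact continuousOn_HK_one hc ht' (hMt t ht) hM hD

lemma exists_HK_majorant (hq : 1 ≤ q) (hM0 : 0 ≤ M) (hMt₀ : M < t₀) (hM : ∀ p ∈ K, |p.2| ≤ M)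
    (hD0 : 0 ≤ D) (hD : ∀ p ∈ K, ∀ p' ∈ K, ‖p.1 - p'.1‖ ≤ D) :
    ∃ φ : ℝ → ℝ, Tendsto φ atTop (𝓝 0) ∧ (∃ C, ∀ t, t₀ ≤ t → φ t ≤ C) ∧
      ∀ t, t₀ ≤ t → ∀ p ∈ K, ∀ p' ∈ K, |HK n q t p p'| ≤ φ t := by
  obtain ⟨c, hc, hMt⟩ := exists_pos_le_one_sub_mul hM0 hMt₀
  have ht₀ : 0 < t₀ := hM0.trans_lt hMt₀
  rcases hq.lt_or_eq with hq | rfl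
  · set S := ∑' j : {j : ℤ // j ≠ 0}, |(j : ℝ)| ^ (-q)
    have hS : 0 ≤ S := tsum_nonneg fun _ => Real.rpow_nonneg (abs_nonneg _) _
    refine ⟨fun t => (2 * c * t) ^ (-q) * S, ?_, ⟨(2 * c * t₀) ^ (-q) * S, fun t ht => ?_⟩,
      fun t ht p hp p' hp' =>
        abs_HK_le_of_one_lt hc (ht₀.trans_le ht) (hMt t ht) hM hq hp hp'⟩
    · simpa using ((tendsto_rpow_neg_atTop (by linarith)).comp
        (tendsto_id.const_mul_atTop (by positivity : 0 < 2 * c))).mul_const S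
    · exact mul_le_mul_of_nonneg_right (Real.rpow_le_rpow_of_nonpos (by positivity)
        (by gcongr) (by linarith)) hS
  · set S := ∑' j : {j : ℤ // j ≠ 0}, ((j : ℝ) ^ 2)⁻¹
    have hS : 0 ≤ S := tsum_nonneg fun _ => by positivity
    refine ⟨fun t => (2 * M + D) / (4 * c * t ^ 2) * S +
        |eulerMascheroniConstant - log (4 * t)| / t, ?_,
      ⟨(2 * M + D) / (4 * c * t₀ ^ 2) * S +
        (|eulerMascheroniConstant| / t₀ + 4 + (4 * t₀ ^ 2)⁻¹), fun t ht => ?_⟩,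
      fun t ht p hp p' hp' => abs_HK_one_le hc (ht₀.trans_le ht) (hMt t ht) hM hD hp hp'⟩
    · simpa using ((tendsto_const_nhds.div_atTop ((tendsto_pow_atTop two_ne_zero).const_mul_atTop
        (by positivity : 0 < 4 * c))).mul_const S).add
        (tendsto_abs_sub_log_mul_div_atTop eulerMascheroniConstant four_pos)
    · refine add_le_add (mul_le_mul_of_nonneg_right ?_ hS) (abs_sub_log_mul_div_le four_pos ht₀ ht)
      gcongr

end RemainderUniform

lemma IsCompact.exists_abs_snd_le {α : Type*} [TopologicalSpace α] {K : Set (α × ℝ)} {t₀ : ℝ}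
    (hK : IsCompact K) (hKne : K.Nonempty) (hKS : ∀ p ∈ K, |p.2| < t₀) :
    ∃ M, 0 ≤ M ∧ M < t₀ ∧ ∀ p ∈ K, |p.2| ≤ M := by
  obtain ⟨p₀, hp₀, hmax⟩ :=
    hK.exists_isMaxOn hKne (continuous_abs.comp continuous_snd).continuousOn
  exact ⟨|p₀.2|, abs_nonneg _, hKS p₀ hp₀, fun p hp => hmax hp⟩

lemma IsCompact.exists_norm_fst_sub_le {E F : Type*} [SeminormedAddCommGroup E]
    [SeminormedAddCommGroup F] {K : Set (E × F)} (hK : IsCompact K) :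
    ∃ D, 0 ≤ D ∧ ∀ p ∈ K, ∀ p' ∈ K, ‖p.1 - p'.1‖ ≤ D := by
  obtain ⟨C, hC⟩ := Metric.isBounded_iff.mp hK.isBounded
  refine ⟨max C 0, le_max_right _ _, fun p hp p' hp' => ?_⟩
  calc ‖p.1 - p'.1‖ ≤ ‖p - p'‖ := norm_fst_le (p - p')
    _ = dist p p' := (dist_eq_norm p p').symm
    _ ≤ max C 0 := (hC hp hp').trans (le_max_left _ _)

lemma ContinuousOn.integrable_of_ae_mem {α E : Type*} [TopologicalSpace α] [T2Space α]
    [MeasurableSpace α] [OpensMeasurableSpace α] [NormedAddCommGroup E] {ν : Measure α}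
    [IsFiniteMeasureOnCompacts ν] {s : Set α} {f : α → E} (hf : ContinuousOn f s)
    (hs : IsCompact s) (hae : ∀ᵐ x ∂ν, x ∈ s) : Integrable f ν := by
  rw [← Measure.restrict_eq_self_of_ae_mem hae]
  exact hf.integrableOn_compact hs

lemma ae_mem_prod_self {α : Type*} [MeasurableSpace α] {μ : Measure α} [SFinite μ]
    {K : Set α} (hμK : μ Kᶜ = 0) : ∀ᵐ x ∂μ.prod μ, x ∈ K ×ˢ K := by
  rw [ae_iff]
  refine measure_mono_null (Set.compl_prod_eq_union K K).le (measure_union_null ?_ ?_)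
  · rw [Measure.prod_prod, hμK, zero_mul]
  · rw [Measure.prod_prod, hμK, mul_zero]

namespace EReal

lemma lt_top_iff_of_le_add {x a : EReal} {ε : ℝ} (h₁ : x ≤ a + ε) (h₂ : a ≤ x + ε) :
    x < ⊤ ↔ a < ⊤ :=
  ⟨fun hx => h₂.trans_lt (add_lt_top hx.ne (coe_ne_top ε)),
    fun ha => h₁.trans_lt (add_lt_top ha.ne (coe_ne_top ε))⟩

lemma tendsto_add_coe {ι : Type*} {l : Filter ι} (a : EReal) {φ : ι → ℝ}
    (hφ : Tendsto φ l (𝓝 0)) : Tendsto (fun i => a + (φ i : EReal)) l (𝓝 a) := by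
  have hadd := (continuousAt_add (p := (a, 0)) (.inr (by simp)) (.inr (by simp))).tendsto.comp
    (tendsto_const_nhds.prodMk_nhds (tendsto_coe.2 hφ))
  simpa [Function.comp_def] using hadd

lemma tendsto_of_le_add {ι : Type*} {l : Filter ι} {x : ι → EReal} {a : EReal} {φ : ι → ℝ}
    (hφ : Tendsto φ l (𝓝 0)) (h : ∀ᶠ i in l, x i ≤ a + φ i ∧ a ≤ x i + φ i) :
    Tendsto x l (𝓝 a) := by
  refine tendsto_of_tendsto_of_tendsto_of_le_of_le' (tendsto_add_coe a (by simpa using hφ.neg))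
    (tendsto_add_coe a hφ) ?_ (h.mono fun i hi => hi.1)
  filter_upwards [h] with i hi
  rw [coe_neg, ← sub_eq_add_neg, sub_le_iff_le_add (.inl (coe_ne_bot _)) (.inl (coe_ne_top _))]
  exact hi.2

end EReal

section Energy

variable {n : ℕ} {k h : StripPt n → StripPt n → ℝ} {μ : Measure (StripPt n)}
  {K : Set (StripPt n)}

lemma measEnergy_add (hh : Integrable (fun x : StripPt n × StripPt n => h x.1 x.2) (μ.prod μ)) :
    measEnergy n (k + h) μ =
      measEnergy n k μ + ((∫ x : StripPt n × StripPt n, h x.1 x.2 ∂μ.prod μ : ℝ) : EReal) := by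
  have hint := integrable_add_iff_integrable_left'
    (g := fun x : StripPt n × StripPt n => k x.1 x.2) hh
  unfold measEnergy
  simp only [Pi.add_apply, hint]
  split_ifs with hk
  · rw [← EReal.coe_add, ← integral_add hk.2 hh]
  · exact (EReal.top_add_coe _).symm

lemma setEnergy_le_measEnergy (hμ : IsProbabilityMeasure μ) (hμK : μ Kᶜ = 0) :
    setEnergy n k K ≤ measEnergy n k μ :=
  iInf_le_of_le μ (iInf_le_of_le hμ (iInf_le _ hμK))

lemma setEnergy_add_le {ε : ℝ} (hK : IsCompact K)
    (hcont : ContinuousOn (fun x : StripPt n × StripPt n => h x.1 x.2) (K ×ˢ K))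
    (hbd : ∀ p ∈ K, ∀ p' ∈ K, |h p p'| ≤ ε) :
    setEnergy n (k + h) K ≤ setEnergy n k K + ε := by
  rw [← EReal.sub_le_iff_le_add (.inl (EReal.coe_ne_bot ε)) (.inl (EReal.coe_ne_top ε))]
  refine le_iInf fun μ => le_iInf fun hμ => le_iInf fun hμK => ?_
  have := hμ
  have hae := ae_mem_prod_self hμK
  have hh := hcont.integrable_of_ae_mem (hK.prod hK) hae
  have hI : ∫ x : StripPt n × StripPt n, h x.1 x.2 ∂μ.prod μ ≤ ε := by
    have hnorm := norm_integral_le_of_norm_le_const (μ := μ.prod μ)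
      (f := fun x : StripPt n × StripPt n => h x.1 x.2) (hae.mono fun x hx => hbd _ hx.1 _ hx.2)
    rw [probReal_univ, mul_one, Real.norm_eq_abs] at hnorm
    exact (le_abs_self _).trans hnorm
  rw [EReal.sub_le_iff_le_add (.inl (EReal.coe_ne_bot ε)) (.inl (EReal.coe_ne_top ε))]
  calc setEnergy n (k + h) K ≤ measEnergy n (k + h) μ := setEnergy_le_measEnergy hμ hμK
    _ = measEnergy n k μ + _ := measEnergy_add hh
    _ ≤ measEnergy n k μ + ε := by gcongr

lemma setEnergy_add_le_and_le_add {ε : ℝ} (hK : IsCompact K)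
    (hcont : ContinuousOn (fun x : StripPt n × StripPt n => h x.1 x.2) (K ×ˢ K))
    (hbd : ∀ p ∈ K, ∀ p' ∈ K, |h p p'| ≤ ε) :
    setEnergy n (k + h) K ≤ setEnergy n k K + ε ∧
      setEnergy n k K ≤ setEnergy n (k + h) K + ε := by
  refine ⟨setEnergy_add_le hK hcont hbd, ?_⟩
  simpa using setEnergy_add_le (k := k + h) (h := -h) hK hcont.neg (by simpa using hbd)

end Energy

theorem stmt_15_general (n : ℕ) (q : ℝ) (hq : 1 ≤ q)
    (K : Set (StripPt n)) (hK : IsCompact K) (hKne : K.Nonempty)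
    (t₀ : ℝ) (hKS : ∀ p ∈ K, |p.2| < t₀) :
    (∃ C : ℝ, ∀ t : ℝ, t₀ ≤ t → ∀ p ∈ K, ∀ p' ∈ K, |HK n q t p p'| ≤ C) ∧
      (∀ ε : ℝ, 0 < ε → ∃ T : ℝ, ∀ t : ℝ, T ≤ t → ∀ p ∈ K, ∀ p' ∈ K,
        |HK n q t p p'| ≤ ε) ∧
      (∀ t₁ t₂ : ℝ, t₀ ≤ t₁ → t₀ ≤ t₂ →
        (setEnergy n (GK n q t₁) K < ⊤ ↔ setEnergy n (GK n q t₂) K < ⊤)) ∧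
      (∀ t₁ : ℝ, t₀ ≤ t₁ →
        (setEnergy n (GK n q t₁) K < ⊤ ↔ setEnergy n (GinfK n q) K < ⊤)) ∧
      Tendsto (fun t : ℝ => setEnergy n (GK n q t) K) atTop
        (𝓝 (setEnergy n (GinfK n q) K)) := by
  obtain ⟨M, hM0, hMt₀, hM⟩ := hK.exists_abs_snd_le hKne hKS
  obtain ⟨D, hD0, hD⟩ := hK.exists_norm_fst_sub_le
  obtain ⟨φ, hφ, ⟨C, hC⟩, hHK⟩ := exists_HK_majorant hq hM0 hMt₀ hM hD0 hD
  have hE : ∀ t, t₀ ≤ t → setEnergy n (GK n q t) K ≤ setEnergy n (GinfK n q) K + φ t ∧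
      setEnergy n (GinfK n q) K ≤ setEnergy n (GK n q t) K + φ t := fun t ht =>
    setEnergy_add_le_and_le_add hK (continuousOn_HK hq hM0 hMt₀ hM hD ht) (hHK t ht)
  have hfin : ∀ t, t₀ ≤ t →
      (setEnergy n (GK n q t) K < ⊤ ↔ setEnergy n (GinfK n q) K < ⊤) := fun t ht =>
    EReal.lt_top_iff_of_le_add (hE t ht).1 (hE t ht).2
  refine ⟨⟨C, fun t ht p hp p' hp' => (hHK t ht p hp p' hp').trans (hC t ht)⟩, fun ε hε => ?_,
    fun t₁ t₂ h₁ h₂ => (hfin t₁ h₁).trans (hfin t₂ h₂).symm, hfin,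
    EReal.tendsto_of_le_add hφ ((eventually_ge_atTop t₀).mono hE)⟩
  obtain ⟨T, hT⟩ := eventually_atTop.mp (hφ.eventually (ge_mem_nhds hε))
  exact ⟨max T t₀, fun t ht p hp p' hp' =>
    (hHK t (le_of_max_le_right ht) p hp p' hp').trans (hT t (le_of_max_le_left ht))⟩

/-- For `q ≥ 1` and compact `K ⊂ S(t₀)`: the remainder `H_t` is uniformly bounded on `K × K`
for `t ≥ t₀`, tends to `0` uniformly on `K × K` as `t → ∞`; consequently the strip energies
`E_K(t)`, `t ∈ [t₀,∞]`, are all simultaneously finite or infinite, and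
`E_K(t) → V_q(K) = E_K(∞)` as `t → ∞`. -/
theorem stmt_15 (n : ℕ) (hn : 1 ≤ n) (q : ℝ) (hq : 1 ≤ q)
    (K : Set (StripPt n)) (hK : IsCompact K) (hKne : K.Nonempty)
    (t₀ : ℝ) (ht₀ : 0 < t₀) (hKS : ∀ p ∈ K, |p.2| < t₀) :
    (∃ C : ℝ, ∀ t : ℝ, t₀ ≤ t → ∀ p ∈ K, ∀ p' ∈ K, |HK n q t p p'| ≤ C) ∧
      (∀ ε : ℝ, 0 < ε → ∃ T : ℝ, ∀ t : ℝ, T ≤ t → ∀ p ∈ K, ∀ p' ∈ K,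
        |HK n q t p p'| ≤ ε) ∧
      (∀ t₁ t₂ : ℝ, t₀ ≤ t₁ → t₀ ≤ t₂ →
        (setEnergy n (GK n q t₁) K < ⊤ ↔ setEnergy n (GK n q t₂) K < ⊤)) ∧
      (∀ t₁ : ℝ, t₀ ≤ t₁ →
        (setEnergy n (GK n q t₁) K < ⊤ ↔ setEnergy n (GinfK n q) K < ⊤)) ∧
      Tendsto (fun t : ℝ => setEnergy n (GK n q t) K) atTop
        (𝓝 (setEnergy n (GinfK n q) K)) :=
  stmt_15_general n q hq K hK hKne t₀ hKS
end

section
/- Fix q ≥ 1, t > 0, n ≥ 1, and bounded sets of points: for x̂ = (x,z), ŷ = (y,w) in a fixed bounded subset of ℝ^{n+1}, as t → ∞ the strip kernel (q > 1 case) satisfies G_t(x̂,ŷ) = |x̂-ŷ|^{-q} + 2ζ(q)/(2t)^q − [B_q(|x-y|² − (q+1)(z-w)²) − C_q z w]/(2t)^{q+2} + O(t^{-(q+3)}), where B_q = q ζ(q+2) and C_q = 2q(q+1) ∑_{j odd} |j|^{-(q+2)}, with the O uniform on the bounded set. -/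
/-!
For `j ≠ 0` put `s = z - (-1)ʲ w`, `m = 2tj` and `r = ‖x - y‖`. Then `r² + (s - m)² = m² (1 + u)`
with `u = (r² + s²)/m² - 2s/m = O(1/|m|)` uniformly on the bounded set, and the binomial expansion
of `(1 + u)^(-q/2)` to second order gives the `j`-th term as
`|m|^(-q) (1 + qs/m + (q(q+1)s²/2 - qr²/2)/m²) + O(|m|^(-q-3))`.
Summing over `j ≠ 0`, the first-order terms are odd in `j` and cancel,
`s² = (z - w)² + 2(1 - (-1)ʲ) zw` splits the second-order terms into sums over all and over odd `j`,
and the errors add up to `O(t^(-q-3))` because `∑ |j|^(-q-3) < ∞`.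
The term `j = 0` is `|x̂ - ŷ|^(-q)`.
-/

open Real Set

lemma abs_le_abs_of_mem_uIcc_zero {u x : ℝ} (hx : x ∈ uIcc 0 u) : |x| ≤ |u| := by
  simpa using abs_sub_left_of_mem_uIcc hx

lemma abs_le_mul_abs_pow_succ_of_hasDerivAt {f f' : ℝ → ℝ} {C u : ℝ} {k : ℕ}
    (hC : 0 ≤ C) (h0 : f 0 = 0) (hf : ∀ x ∈ uIcc 0 u, HasDerivAt f (f' x) x)
    (hf' : ∀ x ∈ uIcc 0 u, |f' x| ≤ C * |x| ^ k) : |f u| ≤ C * |u| ^ (k + 1) := by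
  have hbound : ∀ x ∈ uIcc 0 u, ‖f' x‖ ≤ C * |u| ^ k := fun x hx =>
    (hf' x hx).trans <| mul_le_mul_of_nonneg_left
      (pow_le_pow_left₀ (abs_nonneg x) (abs_le_abs_of_mem_uIcc_zero hx) k) hC
  have := (convex_uIcc 0 u).norm_image_sub_le_of_norm_hasDerivWithin_le
    (fun x hx => (hf x hx).hasDerivWithinAt) hbound left_mem_uIcc right_mem_uIcc
  simpa [h0, pow_succ, mul_assoc] using this

lemma hasDerivAt_one_add_rpow {e x : ℝ} (hx : 0 < 1 + x) :
    HasDerivAt (fun y => (1 + y) ^ e) (e * (1 + x) ^ (e - 1)) x := by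
  simpa using ((hasDerivAt_id x).const_add 1).rpow_const (Or.inl hx.ne')

theorem exists_abs_one_add_rpow_neg_sub_taylor_le {p : ℝ} (hp : 0 < p) :
    ∃ K, 0 ≤ K ∧ ∀ u : ℝ, |u| ≤ 1 / 2 →
      |(1 + u) ^ (-p) - (1 - p * u + p * (p + 1) / 2 * u ^ 2)| ≤ K * |u| ^ 3 := by
  -- `K` bounds the third derivative of `(1 + x) ^ (-p)` on `|x| ≤ 1 / 2`; integrate three times.
  set K := p * (p + 1) * (p + 2) * 2 ^ (p + 3)
  have hK : 0 ≤ K := by positivity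
  have hsmall : ∀ {u x : ℝ}, |u| ≤ 1 / 2 → x ∈ uIcc 0 u → |x| ≤ 1 / 2 ∧ 0 < 1 + x :=
    fun {u x} hu hx => by
      have := (abs_le_abs_of_mem_uIcc_zero hx).trans hu
      exact ⟨this, by linarith [neg_abs_le x]⟩
  have h₁ : ∀ u : ℝ, |u| ≤ 1 / 2 →
      |p * (p + 1) * ((1 + u) ^ (-p - 2) - 1)| ≤ K * |u| ^ (0 + 1) := by
    refine fun u hu => abs_le_mul_abs_pow_succ_of_hasDerivAt hK (by simp)
      (f := fun y => p * (p + 1) * ((1 + y) ^ (-p - 2) - 1))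
      (f' := fun x => p * (p + 1) * ((-p - 2) * (1 + x) ^ (-p - 3)))
      (fun x hx => ?_) (fun x hx => ?_)
    · have := ((hasDerivAt_one_add_rpow (e := -p - 2) (hsmall hu hx).2).sub_const 1).const_mul
        (p * (p + 1))
      exact this.congr_deriv (by ring_nf)
    · have hhalf : 1 / 2 ≤ 1 + x := by linarith [neg_abs_le x, (hsmall hu hx).1]
      have h2 : (1 + x) ^ (-p - 3) ≤ 2 ^ (p + 3) := by
        calc (1 + x) ^ (-p - 3) ≤ (1 / 2) ^ (-p - 3) :=
              rpow_le_rpow_of_nonpos (by norm_num) hhalf (by linarith)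
          _ = 2 ^ (p + 3) := by
              rw [one_div, inv_rpow (by norm_num), ← rpow_neg (by norm_num)]; ring_nf
      have hpos : 0 ≤ p * (p + 1) * (p + 2) := by positivity
      calc |p * (p + 1) * ((-p - 2) * (1 + x) ^ (-p - 3))|
          = p * (p + 1) * (p + 2) * (1 + x) ^ (-p - 3) := by
            rw [show p * (p + 1) * ((-p - 2) * (1 + x) ^ (-p - 3))
                = -(p * (p + 1) * (p + 2) * (1 + x) ^ (-p - 3)) by ring, abs_neg,
              abs_of_nonneg (mul_nonneg hpos (rpow_nonneg (by linarith) _))]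
        _ ≤ K * |x| ^ 0 := by rw [pow_zero, mul_one]; exact mul_le_mul_of_nonneg_left h2 hpos
  have h₂ : ∀ u : ℝ, |u| ≤ 1 / 2 →
      |-p * (1 + u) ^ (-p - 1) + p - p * (p + 1) * u| ≤ K * |u| ^ (1 + 1) := by
    refine fun u hu => abs_le_mul_abs_pow_succ_of_hasDerivAt hK (by simp)
      (f := fun y => -p * (1 + y) ^ (-p - 1) + p - p * (p + 1) * y) (fun x hx => ?_)
      (fun x hx => h₁ x (hsmall hu hx).1)
    have := (((hasDerivAt_one_add_rpow (e := -p - 1) (hsmall hu hx).2).const_mul (-p)).add_const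
      p).sub ((hasDerivAt_id x).const_mul (p * (p + 1)))
    exact this.congr_deriv (by ring_nf)
  refine ⟨K, hK, fun u hu => abs_le_mul_abs_pow_succ_of_hasDerivAt hK (by simp)
    (f := fun y => (1 + y) ^ (-p) - (1 - p * y + p * (p + 1) / 2 * y ^ 2)) (fun x hx => ?_)
    (fun x hx => h₂ x (hsmall hu hx).1)⟩
  have := (hasDerivAt_one_add_rpow (e := -p) (hsmall hu hx).2).sub
    ((((hasDerivAt_id x).const_mul p).const_sub 1).add
      ((hasDerivAt_pow 2 x).const_mul (p * (p + 1) / 2)))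
  exact this.congr_deriv (by simp; ring_nf)

theorem exists_abs_one_add_quadratic_rpow_sub_le {q R : ℝ} (hq : 0 < q) :
    ∃ K δ, 0 < δ ∧ ∀ r s v : ℝ, |r| ≤ R → |s| ≤ R → |v| ≤ δ →
      |(1 + ((r ^ 2 + s ^ 2) * v ^ 2 - 2 * s * v)) ^ (-(q / 2)) -
          (1 + q * s * v + (q * (q + 1) / 2 * s ^ 2 - q / 2 * r ^ 2) * v ^ 2)| ≤ K * |v| ^ 3 := by
  obtain ⟨K, hK, htaylor⟩ := exists_abs_one_add_rpow_neg_sub_taylor_le (half_pos hq)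
  set c := 2 * R ^ 2 + 2 * |R| + 1
  have hc : 1 ≤ c := le_add_of_nonneg_left (by positivity)
  refine ⟨K * c ^ 3 + q / 2 * (q / 2 + 1) / 2 * (4 * R ^ 4 + 8 * R ^ 2 * |R|), (2 * c)⁻¹,
    by positivity, fun r s v hr hs hv => ?_⟩
  have hv1 : |v| ≤ 1 := hv.trans (inv_le_one_of_one_le₀ (by linarith))
  have hr2 : r ^ 2 ≤ R ^ 2 := sq_le_sq.2 (hr.trans (le_abs_self R))
  have hs2 : s ^ 2 ≤ R ^ 2 := sq_le_sq.2 (hs.trans (le_abs_self R))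
  set u := (r ^ 2 + s ^ 2) * v ^ 2 - 2 * s * v
  have hsR : |s| ≤ |R| := hs.trans (le_abs_self R)
  have ha : |r ^ 2 + s ^ 2| ≤ 2 * R ^ 2 := by
    rw [abs_of_nonneg (by positivity)]; linarith
  have hu : |u| ≤ c * |v| := by
    calc |u| ≤ |r ^ 2 + s ^ 2| * |v| ^ 2 + 2 * |s| * |v| := by
          refine (abs_sub _ _).trans_eq ?_
          rw [abs_mul, abs_mul, abs_mul, abs_pow, abs_two]
      _ ≤ 2 * R ^ 2 * |v| + 2 * |R| * |v| := by
          gcongr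
          nlinarith [abs_nonneg v]
      _ ≤ c * |v| := by nlinarith [abs_nonneg v]
  have hu' : |u| ≤ 1 / 2 := by
    calc |u| ≤ c * (2 * c)⁻¹ := hu.trans (mul_le_mul_of_nonneg_left hv (by linarith))
      _ = 1 / 2 := by field_simp
  -- the Taylor polynomial in `u` agrees with the target up to terms of order `v ^ 3`
  have hpoly : (1 - q / 2 * u + q / 2 * (q / 2 + 1) / 2 * u ^ 2) -
      (1 + q * s * v + (q * (q + 1) / 2 * s ^ 2 - q / 2 * r ^ 2) * v ^ 2) =
      q / 2 * (q / 2 + 1) / 2 * v ^ 3 * ((r ^ 2 + s ^ 2) ^ 2 * v - 4 * (r ^ 2 + s ^ 2) * s) := by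
    ring
  have hrem :
      |(r ^ 2 + s ^ 2) ^ 2 * v - 4 * (r ^ 2 + s ^ 2) * s| ≤ 4 * R ^ 4 + 8 * R ^ 2 * |R| := by
    calc _ ≤ |r ^ 2 + s ^ 2| ^ 2 * |v| + 4 * |r ^ 2 + s ^ 2| * |s| := by
          refine (abs_sub _ _).trans_eq ?_
          rw [abs_mul, abs_mul, abs_mul, abs_pow, abs_of_pos (by norm_num : (0 : ℝ) < 4)]
      _ ≤ (2 * R ^ 2) ^ 2 * 1 + 4 * (2 * R ^ 2) * |R| := by gcongr
      _ = 4 * R ^ 4 + 8 * R ^ 2 * |R| := by ring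
  calc _ = |((1 + u) ^ (-(q / 2)) - (1 - q / 2 * u + q / 2 * (q / 2 + 1) / 2 * u ^ 2)) +
        q / 2 * (q / 2 + 1) / 2 * v ^ 3 * ((r ^ 2 + s ^ 2) ^ 2 * v - 4 * (r ^ 2 + s ^ 2) * s)| := by
        rw [← hpoly]; ring_nf
    _ ≤ K * |u| ^ 3 + q / 2 * (q / 2 + 1) / 2 * |v| ^ 3 * (4 * R ^ 4 + 8 * R ^ 2 * |R|) := by
        refine (abs_add_le _ _).trans (add_le_add (htaylor u hu') ?_)
        rw [abs_mul, abs_mul, abs_pow, abs_of_nonneg (by positivity)]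
        gcongr
    _ ≤ K * (c * |v|) ^ 3 +
          q / 2 * (q / 2 + 1) / 2 * |v| ^ 3 * (4 * R ^ 4 + 8 * R ^ 2 * |R|) := by
        gcongr
    _ = _ := by ring

noncomputable def secondOrderApprox (q r s m : ℝ) : ℝ :=
  |m| ^ (-q) * (1 + q * s / m + (q * (q + 1) / 2 * s ^ 2 - q / 2 * r ^ 2) / m ^ 2)

lemma sq_rpow_neg_half (q m : ℝ) : (m ^ 2) ^ (-q / 2) = |m| ^ (-q) := by
  rw [← sq_abs, ← rpow_natCast, ← rpow_mul (abs_nonneg m)]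
  congr 1
  push_cast
  ring

theorem exists_abs_rpow_sub_secondOrderApprox_le {q R : ℝ} (hq : 0 < q) :
    ∃ K M, 0 < M ∧ ∀ r s m : ℝ, |r| ≤ R → |s| ≤ R → M ≤ |m| →
      |(r ^ 2 + (s - m) ^ 2) ^ (-q / 2) - secondOrderApprox q r s m| ≤ K * |m| ^ (-(q + 3)) := by
  obtain ⟨K, δ, hδ, hK⟩ := exists_abs_one_add_quadratic_rpow_sub_le (R := R) hq
  refine ⟨K, δ⁻¹, inv_pos.2 hδ, fun r s m hr hs hm => ?_⟩
  have hm0 : m ≠ 0 := abs_pos.1 ((inv_pos.2 hδ).trans_le hm)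
  have hv : |m⁻¹| ≤ δ := by rw [abs_inv]; exact inv_le_of_inv_le₀ hδ hm
  have hfactor :
      r ^ 2 + (s - m) ^ 2 = m ^ 2 * (1 + ((r ^ 2 + s ^ 2) * m⁻¹ ^ 2 - 2 * s * m⁻¹)) := by
    field_simp; ring
  have h1u : 0 ≤ 1 + ((r ^ 2 + s ^ 2) * m⁻¹ ^ 2 - 2 * s * m⁻¹) :=
    nonneg_of_mul_nonneg_right (a := m ^ 2) (by rw [← hfactor]; positivity) (by positivity)
  have happrox : secondOrderApprox q r s m = |m| ^ (-q) *
      (1 + q * s * m⁻¹ + (q * (q + 1) / 2 * s ^ 2 - q / 2 * r ^ 2) * m⁻¹ ^ 2) := by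
    rw [secondOrderApprox]; ring
  rw [hfactor, mul_rpow (sq_nonneg m) h1u, sq_rpow_neg_half, happrox, ← mul_sub, abs_mul,
    abs_of_nonneg (rpow_nonneg (abs_nonneg m) _), neg_div,
    show -(q + 3) = -q - (3 : ℕ) by push_cast; ring, rpow_sub_natCast (abs_ne_zero.2 hm0)]
  calc |m| ^ (-q) * |_ - _| ≤ |m| ^ (-q) * (K * |m⁻¹| ^ 3) :=
        mul_le_mul_of_nonneg_left (hK r s m⁻¹ hr hs hv) (rpow_nonneg (abs_nonneg m) _)
    _ = K * (|m| ^ (-q) / |m| ^ 3) := by rw [abs_inv]; ring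

lemma abs_mul_rpow_of_pos {a : ℝ} (ha : 0 < a) (x y : ℝ) : |a * x| ^ y = a ^ y * |x| ^ y := by
  rw [abs_mul, abs_of_pos ha, mul_rpow ha.le (abs_nonneg x)]

lemma one_le_abs_intCast {j : ℤ} (hj : j ≠ 0) : 1 ≤ |(j : ℝ)| := by
  rw [← Int.cast_abs]
  exact_mod_cast Int.one_le_abs hj

lemma abs_sub_neg_one_zpow_mul_le (z w : ℝ) (j : ℤ) :
    |z - (-1 : ℝ) ^ j * w| ≤ |z| + |w| := by
  simpa only [abs_mul, abs_neg_one_zpow, one_mul] using abs_sub z ((-1 : ℝ) ^ j * w)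

lemma summable_ne_zero_abs_int_rpow {b : ℝ} (hb : 1 < b) :
    Summable fun j : {j : ℤ // j ≠ 0} => |(j : ℝ)| ^ (-b) :=
  (summable_abs_int_rpow hb).subtype _

lemma hasSum_ne_zero_zero_of_odd {g : ℤ → ℝ} (hg : ∀ j, g (-j) = -g j)
    (hs : Summable fun j : {j : ℤ // j ≠ 0} => g j) :
    HasSum (fun j : {j : ℤ // j ≠ 0} => g j) 0 := by
  let e : {j : ℤ // j ≠ 0} ≃ {j : ℤ // j ≠ 0} := (Equiv.neg ℤ).subtypeEquiv (by simp)
  have h := e.tsum_eq fun j => g j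
  simp only [e, Equiv.subtypeEquiv_apply, Equiv.neg_apply, hg, tsum_neg] at h
  convert hs.hasSum
  linarith

lemma tsum_ne_zero_mul_one_sub_neg_one_zpow (f : ℤ → ℝ) :
    ∑' j : {j : ℤ // j ≠ 0}, f j * (1 - (-1 : ℝ) ^ (j : ℤ)) =
      2 * ∑' j : {j : ℤ // Odd j}, f j := by
  set F := fun j : ℤ => f j * (1 - (-1 : ℝ) ^ j)
  have hsupp : Function.support F ⊆ {j | Odd j} := fun j hj => by
    by_contra hodd
    exact hj (by simp [F, (Int.not_odd_iff_even.1 hodd).neg_one_zpow])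
  rw [← tsum_mul_left]
  calc ∑' j : {j : ℤ // j ≠ 0}, F j = ∑' j, F j :=
        tsum_subtype_eq_of_support_subset (s := {j | j ≠ 0})
          (hsupp.trans fun j hj => by rintro rfl; simp at hj)
    _ = ∑' j : {j : ℤ // Odd j}, F j :=
        (tsum_subtype_eq_of_support_subset (s := {j | Odd j}) hsupp).symm
    _ = _ := tsum_congr fun j => by simp only [F, j.2.neg_one_zpow]; ring

lemma hasSum_ne_zero_mul_one_sub_neg_one_zpow {f : ℤ → ℝ}
    (hf : Summable fun j : {j : ℤ // j ≠ 0} => f j) :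
    HasSum (fun j : {j : ℤ // j ≠ 0} => f j * (1 - (-1 : ℝ) ^ (j : ℤ)))
      (2 * ∑' j : {j : ℤ // Odd j}, f j) := by
  rw [← tsum_ne_zero_mul_one_sub_neg_one_zpow]
  refine Summable.hasSum ((hf.abs.mul_left 2).of_norm_bounded fun j => ?_)
  rw [Real.norm_eq_abs, abs_mul, mul_comm]
  gcongr
  rcases Int.even_or_odd (j : ℤ) with h | h <;> norm_num [h.neg_one_zpow]

lemma secondOrderApprox_two_mul_intCast {q t : ℝ} (ht : 0 < t) (r z w : ℝ) {j : ℤ}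
    (hj : j ≠ 0) :
    secondOrderApprox q r (z - (-1 : ℝ) ^ j * w) (2 * t * j) =
      |(j : ℝ)| ^ (-q) / (2 * t) ^ q +
        q / ((2 * t) ^ q * (2 * t)) * ((z - (-1 : ℝ) ^ j * w) * |(j : ℝ)| ^ (-q) / j) +
        ((q * (q + 1) / 2 * (z - w) ^ 2 - q / 2 * r ^ 2) * |(j : ℝ)| ^ (-(q + 2)) +
          q * (q + 1) * z * w * (|(j : ℝ)| ^ (-(q + 2)) * (1 - (-1) ^ j))) / (2 * t) ^ (q + 2) := by
  have h2t : 0 < 2 * t := by positivity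
  have hj' : (j : ℝ) ≠ 0 := Int.cast_ne_zero.2 hj
  have hB : |(j : ℝ)| ^ (-(q + 2)) = |(j : ℝ)| ^ (-q) / (j : ℝ) ^ 2 := by
    rw [show -(q + 2) = -q - (2 : ℕ) by push_cast; ring, rpow_sub_natCast (abs_ne_zero.2 hj'),
      sq_abs]
  have hε : ((-1 : ℝ) ^ j) ^ 2 = 1 := by
    rcases Int.even_or_odd j with h | h <;> simp [h.neg_one_zpow]
  have hs : (z - (-1 : ℝ) ^ j * w) ^ 2 = (z - w) ^ 2 + 2 * (1 - (-1) ^ j) * z * w := by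
    linear_combination w ^ 2 * hε
  rw [hB, secondOrderApprox, hs, abs_mul_rpow_of_pos h2t, rpow_neg h2t.le,
    show q + 2 = q + (2 : ℕ) by norm_num, rpow_add_natCast h2t.ne']
  field_simp
  ring

theorem hasSum_secondOrderApprox {q t : ℝ} (hq : 1 < q) (ht : 0 < t) (r z w : ℝ) :
    HasSum (fun j : {j : ℤ // j ≠ 0} =>
        secondOrderApprox q r (z - (-1 : ℝ) ^ (j : ℤ) * w) (2 * t * j))
      ((∑' j : {j : ℤ // j ≠ 0}, |(j : ℝ)| ^ (-q)) / (2 * t) ^ q -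
        ((q / 2 * ∑' j : {j : ℤ // j ≠ 0}, |(j : ℝ)| ^ (-(q + 2))) *
            (r ^ 2 - (q + 1) * (z - w) ^ 2) -
          (2 * q * (q + 1) * ∑' j : {j : ℤ // Odd j}, |(j : ℝ)| ^ (-(q + 2))) * z * w) /
          (2 * t) ^ (q + 2)) := by
  set A : ℤ → ℝ := fun j => |(j : ℝ)| ^ (-q)
  set B : ℤ → ℝ := fun j => |(j : ℝ)| ^ (-(q + 2))
  set O : ℤ → ℝ := fun j => (z - (-1 : ℝ) ^ j * w) * A j / j
  have hA : Summable fun j : {j : ℤ // j ≠ 0} => A j := summable_ne_zero_abs_int_rpow hq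
  have hB : Summable fun j : {j : ℤ // j ≠ 0} => B j :=
    summable_ne_zero_abs_int_rpow (by linarith)
  have hO : HasSum (fun j : {j : ℤ // j ≠ 0} => O j) 0 := by
    refine hasSum_ne_zero_zero_of_odd (fun j => ?_) ((hA.mul_left (|z| + |w|)).of_norm_bounded
      fun j => ?_)
    · rcases Int.even_or_odd j with h | h <;>
        simp [O, A, h.neg_one_zpow, h.neg.neg_one_zpow, div_neg]
    · have hA0 : 0 ≤ A j := rpow_nonneg (abs_nonneg _) _
      rw [Real.norm_eq_abs, abs_div, abs_mul, abs_of_nonneg hA0]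
      calc |z - (-1 : ℝ) ^ (j : ℤ) * w| * A j / |((j : ℤ) : ℝ)|
          ≤ |z - (-1 : ℝ) ^ (j : ℤ) * w| * A j :=
            div_le_self (by positivity) (one_le_abs_intCast j.2)
        _ ≤ (|z| + |w|) * A j :=
            mul_le_mul_of_nonneg_right (abs_sub_neg_one_zpow_mul_le z w j) hA0
  have key := ((hA.hasSum.div_const ((2 * t) ^ q)).add
    (hO.mul_left (q / ((2 * t) ^ q * (2 * t))))).add
    (((hB.hasSum.mul_left (q * (q + 1) / 2 * (z - w) ^ 2 - q / 2 * r ^ 2)).add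
      ((hasSum_ne_zero_mul_one_sub_neg_one_zpow hB).mul_left (q * (q + 1) * z * w))).div_const
      ((2 * t) ^ (q + 2)))
  replace key := key.congr_fun fun j => secondOrderApprox_two_mul_intCast ht r z w j.2
  refine key.summable.hasSum_iff.2 ?_
  rw [key.tsum_eq]
  ring

lemma exists_hasSum_abs_sub_le {ι : Type*} {f g e : ι → ℝ} {a b : ℝ} (hg : HasSum g a)
    (he : HasSum e b) (h : ∀ i, |f i - g i| ≤ e i) : ∃ c, HasSum f c ∧ |c - a| ≤ b := by
  have hd : Summable fun i => f i - g i := he.summable.of_norm_bounded h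
  refine ⟨∑' i, (f i - g i) + a, by simpa using hd.hasSum.add hg, ?_⟩
  rw [add_sub_cancel_right]
  exact hd.hasSum.norm_le_of_bounded he h

theorem stmt_17_general (n : ℕ) (q : ℝ) (hq : 1 < q) (R : ℝ) :
    ∃ C T : ℝ, 0 < T ∧ ∀ t : ℝ, T ≤ t →
      ∀ (x y : EuclideanSpace ℝ (Fin n)) (z w : ℝ),
        ‖x‖ ≤ R → ‖y‖ ≤ R → |z| ≤ R → |w| ≤ R → ¬(x = y ∧ z = w) →
        |(∑' j : ℤ, (‖x - y‖ ^ 2 + (z - 2 * t * j - (-1 : ℝ) ^ j * w) ^ 2) ^ (-q / 2)) -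
            ((‖x - y‖ ^ 2 + (z - w) ^ 2) ^ (-q / 2) +
              (∑' j : {j : ℤ // j ≠ 0}, (|(j : ℤ)| : ℝ) ^ (-q)) / (2 * t) ^ q -
              ((q / 2 * ∑' j : {j : ℤ // j ≠ 0}, (|(j : ℤ)| : ℝ) ^ (-(q + 2))) *
                    (‖x - y‖ ^ 2 - (q + 1) * (z - w) ^ 2) -
                  (2 * q * (q + 1) *
                      ∑' j : {j : ℤ // Odd j}, (|(j : ℤ)| : ℝ) ^ (-(q + 2))) * z * w) /
                (2 * t) ^ (q + 2))| ≤
          C / t ^ (q + 3) := by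
  obtain ⟨K, M, hM, hK⟩ :=
    exists_abs_rpow_sub_secondOrderApprox_le (R := 2 * R) (by linarith : 0 < q)
  set S := ∑' j : {j : ℤ // j ≠ 0}, |(j : ℝ)| ^ (-(q + 3))
  refine ⟨K * S / 2 ^ (q + 3), M / 2, half_pos hM, fun t ht x y z w hx hy hz hw _ => ?_⟩
  have ht0 : 0 < 2 * t := by linarith
  set r := ‖x - y‖
  set f : ℤ → ℝ := fun j => (r ^ 2 + (z - 2 * t * j - (-1 : ℝ) ^ j * w) ^ 2) ^ (-q / 2)
  have herr : ∀ j : {j : ℤ // j ≠ 0},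
      |f j - secondOrderApprox q r (z - (-1 : ℝ) ^ (j : ℤ) * w) (2 * t * j)| ≤
        K * |2 * t * j| ^ (-(q + 3)) := fun j => by
    have hm : M ≤ |2 * t * (j : ℝ)| := by
      rw [abs_mul, abs_of_pos ht0]
      nlinarith [one_le_abs_intCast j.2]
    simpa only [f, sub_right_comm] using hK r _ _ (by rw [abs_norm]; linarith [norm_sub_le x y])
      ((abs_sub_neg_one_zpow_mul_le z w j).trans (by linarith)) hm
  have hE : HasSum (fun j : {j : ℤ // j ≠ 0} => K * |2 * t * j| ^ (-(q + 3)))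
      (K * S / 2 ^ (q + 3) / t ^ (q + 3)) := by
    have hS := (summable_ne_zero_abs_int_rpow (by linarith : 1 < q + 3)).hasSum
    rw [show K * S / 2 ^ (q + 3) / t ^ (q + 3) = K * (2 * t) ^ (-(q + 3)) * S by
      rw [rpow_neg ht0.le, mul_rpow zero_le_two (by linarith)]; field_simp]
    exact (hS.mul_left _).congr_fun fun j => by rw [abs_mul_rpow_of_pos ht0]; ring
  obtain ⟨c, hc, hcG⟩ :=
    exists_hasSum_abs_sub_le (hasSum_secondOrderApprox hq (by linarith) r z w) hE herr
  rw [((hasSum_singleton 0 f).hasSum_compl_iff.mp hc).tsum_eq]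
  convert hcG using 2
  simp [f]
  ring

/-- Improved asymptotic of the thick-strip kernel as `t → ∞` (case `q > 1`), uniform over a
bounded set of points: with `A_q = 2ζ(q) = ∑_{j≠0}|j|^{-q}`, `B_q = qζ(q+2)`, and
`C_q = 2q(q+1)∑_{j odd}|j|^{-(q+2)}`, one has
`G_t(x̂,ŷ) = |x̂-ŷ|^{-q} + A_q/(2t)^q − [B_q(|x-y|² − (q+1)(z-w)²) − C_q z w]/(2t)^{q+2}
  + O(t^{-(q+3)})`. -/
theorem stmt_17 (n : ℕ) (hn : 1 ≤ n) (q : ℝ) (hq : 1 < q) (R : ℝ) (hR : 0 < R) :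
    ∃ C T : ℝ, 0 < T ∧ ∀ t : ℝ, T ≤ t →
      ∀ (x y : EuclideanSpace ℝ (Fin n)) (z w : ℝ),
        ‖x‖ ≤ R → ‖y‖ ≤ R → |z| ≤ R → |w| ≤ R → ¬(x = y ∧ z = w) →
        |(∑' j : ℤ, (‖x - y‖ ^ 2 + (z - 2 * t * j - (-1 : ℝ) ^ j * w) ^ 2) ^ (-q / 2)) -
            ((‖x - y‖ ^ 2 + (z - w) ^ 2) ^ (-q / 2) +
              (∑' j : {j : ℤ // j ≠ 0}, (|(j : ℤ)| : ℝ) ^ (-q)) / (2 * t) ^ q -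
              ((q / 2 * ∑' j : {j : ℤ // j ≠ 0}, (|(j : ℤ)| : ℝ) ^ (-(q + 2))) *
                    (‖x - y‖ ^ 2 - (q + 1) * (z - w) ^ 2) -
                  (2 * q * (q + 1) *
                      ∑' j : {j : ℤ // Odd j}, (|(j : ℤ)| : ℝ) ^ (-(q + 2))) * z * w) /
                (2 * t) ^ (q + 2))| ≤
          C / t ^ (q + 3) :=
  stmt_17_general n q hq R
end
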